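/- arXiv:2507.11681 — 11 statements merged into one kernel-verified Lean document; each statement's English description precedes it below -/
import Mathlib

section
/- A 1-Visit instance with non-decreasing deadlines d_1 ≤ ... ≤ d_n has a feasible schedule if and only if every element of its discretized sequence is strictly positive. -/
/-- Auxiliary recursion for the discretized sequence, counting down from the top index. -/
def discAux (d : ℕ → ℕ) (n : ℕ) : ℕ → ℕ
  | 0 => d (n - 1)
  | k + 1 => min (discAux d n k - 1) (d (n - 1 - (k + 1)))

/-- The discretized sequence of `d` (of length `n`): `a (n-1) = d (n-1)` and
`a i = min (a (i+1) - 1) (d i)` for `i < n - 1`. -/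
def disc (d : ℕ → ℕ) (n : ℕ) (i : ℕ) : ℕ := discAux d n (n - 1 - i)

lemma disc_last (d : ℕ → ℕ) (n : ℕ) : disc d n (n - 1) = d (n - 1) := by
  unfold disc
  rw [Nat.sub_self]
  rfl

lemma disc_step (d : ℕ → ℕ) {n i : ℕ} (h : i + 1 < n) :
    disc d n i = min (disc d n (i + 1) - 1) (d i) := by
  unfold disc
  have h1 : n - 1 - i = (n - 1 - (i + 1)) + 1 := by omega
  rw [h1]
  show min (discAux d n (n - 1 - (i + 1)) - 1) (d (n - 1 - ((n - 1 - (i + 1)) + 1))) = _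
  congr 2
  omega

lemma disc_ge (d : ℕ → ℕ) (n : ℕ) (hd : ∀ i < n, i + 1 ≤ d i) :
    ∀ k i, i < n → n - 1 - i ≤ k → i + 1 ≤ disc d n i := by
  intro k
  induction k with
  | zero =>
    intro i hi hk
    have : i = n - 1 := by omega
    subst this
    rw [disc_last]
    have := hd (n - 1) (by omega)
    omega
  | succ k ih =>
    intro i hi hk
    by_cases hc : n - 1 - i ≤ k
    · exact ih i hi hc
    · have h1 : i + 1 < n := by omega
      rw [disc_step d h1]
      have h2 := ih (i + 1) h1 (by omega)
      have h3 := hd i hi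
      omega

lemma disc_lb (d : ℕ → ℕ) (n : ℕ) (h : ∀ i < n, 0 < disc d n i) :
    ∀ i < n, i + 1 ≤ disc d n i := by
  intro i
  induction i with
  | zero => intro hi; exact h 0 hi
  | succ i ih =>
    intro hi
    have h1 : i + 1 < n := hi
    have h2 := ih (by omega)
    rw [disc_step d h1] at h2
    have h3 := h (i + 1) hi
    omega

lemma disc_le (d : ℕ → ℕ) {n i : ℕ} (hi : i < n) : disc d n i ≤ d i := by
  by_cases h : i + 1 < n
  · rw [disc_step d h]; exact min_le_right _ _
  · have : i = n - 1 := by omega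
    subst this
    rw [disc_last]

theorem stmt_1 (n : ℕ) (d : ℕ → ℕ) (hpos : ∀ i < n, 0 < d i)
    (hmono : ∀ i j, i ≤ j → j < n → d i ≤ d j) :
    (∃ σ : Equiv.Perm (Fin n), ∀ i : Fin n, (σ.symm i : ℕ) + 1 ≤ d (i : ℕ)) ↔
      (∀ i < n, 0 < disc d n i) := by
  constructor
  · rintro ⟨σ, hσ⟩
    have hd : ∀ i < n, i + 1 ≤ d i := by
      intro i hi
      have hex : ∃ j : Fin (i + 1), i ≤ (σ.symm ⟨j, by omega⟩ : ℕ) := by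
        by_contra hc
        push_neg at hc
        have inj : Function.Injective
            (fun j : Fin (i + 1) => (⟨(σ.symm ⟨j.1, by omega⟩ : Fin n), hc j⟩ : Fin i)) := by
          intro a b hab
          simp only [Fin.mk.injEq] at hab
          have h2 := σ.symm.injective (Fin.ext hab)
          rw [Fin.mk_eq_mk] at h2
          exact Fin.ext h2
        have := Fintype.card_le_of_injective _ inj
        simp at this
      obtain ⟨j, hj⟩ := hex
      have h1 := hσ ⟨j, by omega⟩
      have h2 : d (j : ℕ) ≤ d i := hmono j i (by omega) hi
      simp only at h1
      omega
    intro i hi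
    have := disc_ge d n hd (n - 1 - i) i hi le_rfl
    omega
  · intro h
    refine ⟨Equiv.refl _, fun i => ?_⟩
    have h1 := disc_lb d n h i i.isLt
    have h2 := disc_le d i.isLt
    simpa using h1.trans h2
end

section
/- For every i ∈ [n], in any feasible 2-Visits schedule, at most n - i primary visits occur at positions strictly greater than a_i, where a_i is the i-th element of the discretized sequence of the input. -/
/-- A feasible 2-Visits schedule: each task `i < n` has a primary position `p i`
and a secondary position `s i`, all `2n` positions in `[1, 2n]` and pairwise distinct,
with `p i ≤ d i` and `s i < p i ∨ s i ≤ p i + d i`. -/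
def Feasible2V (n : ℕ) (d p s : ℕ → ℕ) : Prop :=
  (∀ i < n, 1 ≤ p i ∧ p i ≤ 2 * n ∧ 1 ≤ s i ∧ s i ≤ 2 * n) ∧
  (∀ i < n, ∀ j < n, i ≠ j → p i ≠ p j) ∧
  (∀ i < n, ∀ j < n, i ≠ j → s i ≠ s j) ∧
  (∀ i < n, ∀ j < n, p i ≠ s j) ∧
  (∀ i < n, p i ≤ d i) ∧
  (∀ i < n, s i < p i ∨ s i ≤ p i + d i)

theorem stmt_3 (n : ℕ) (d p s : ℕ → ℕ) (hpos : ∀ i < n, 0 < d i)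
    (hmono : ∀ i j, i ≤ j → j < n → d i ≤ d j)
    (hf : Feasible2V n d p s) :
    ∀ i < n, ((Finset.range n).filter (fun j => disc d n i < p j)).card ≤ n - (i + 1) := by
  obtain ⟨hb, hp, hs, hps, hpd, hsd⟩ := hf
  suffices key : ∀ k, k < n →
      ((Finset.range n).filter (fun j => disc d n (n - 1 - k) < p j)).card ≤ k by
    intro i hi
    have h1 : n - 1 - (n - 1 - i) = i := by omega
    have := key (n - 1 - i) (by omega)
    rw [h1] at this
    omega
  intro k
  induction k with
  | zero =>
    intro _
    have hd0 : disc d n (n - 1 - 0) = d (n - 1) := by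
      simp [disc, discAux]
    rw [hd0]
    have : (Finset.range n).filter (fun j => d (n - 1) < p j) = ∅ := by
      rw [Finset.filter_eq_empty_iff]
      intro j hj
      simp only [Finset.mem_range] at hj
      have h1 := hpd j hj
      have h2 := hmono j (n - 1) (by omega) (by omega)
      omega
    rw [this]; simp
  | succ k ih =>
    intro hk
    set i := n - 1 - (k + 1) with hidef
    have hik : n - 1 - i = k + 1 := by omega
    have hik2 : n - 1 - (i + 1) = k := by omega
    have hd : disc d n i = min (disc d n (i + 1) - 1) (d i) := by
      rw [disc, disc, hik, hik2, discAux]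
    have hi1 : n - 1 - k = i + 1 := by omega
    have ihk := ih (by omega)
    rw [hi1] at ihk
    set a1 := disc d n (i + 1) with ha1
    rcases min_cases (a1 - 1) (d i) with ⟨hmin, hle⟩ | ⟨hmin, hle⟩
    · -- disc d n i = a1 - 1
      rw [hd, hmin]
      have hsub : (Finset.range n).filter (fun j => a1 - 1 < p j) ⊆
          ((Finset.range n).filter (fun j => a1 < p j)) ∪
          ((Finset.range n).filter (fun j => p j = a1)) := by
        intro j hj
        simp only [Finset.mem_filter, Finset.mem_range, Finset.mem_union] at hj ⊢
        omega
      have hcard1 : ((Finset.range n).filter (fun j => p j = a1)).card ≤ 1 := by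
        apply Finset.card_le_one.mpr
        intro x hx y hy
        simp only [Finset.mem_filter, Finset.mem_range] at hx hy
        by_contra hxy
        exact hp x hx.1 y hy.1 hxy (hx.2.trans hy.2.symm)
      calc ((Finset.range n).filter (fun j => a1 - 1 < p j)).card
          ≤ (((Finset.range n).filter (fun j => a1 < p j)) ∪
            ((Finset.range n).filter (fun j => p j = a1))).card := Finset.card_le_card hsub
        _ ≤ ((Finset.range n).filter (fun j => a1 < p j)).card +
            ((Finset.range n).filter (fun j => p j = a1)).card := Finset.card_union_le _ _
        _ ≤ k + 1 := by omega
    · -- disc d n i = d i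
      rw [hd, hmin]
      have hsub : (Finset.range n).filter (fun j => d i < p j) ⊆ Finset.Ico (i + 1) n := by
        intro j hj
        simp only [Finset.mem_filter, Finset.mem_range] at hj
        simp only [Finset.mem_Ico]
        refine ⟨?_, hj.1⟩
        by_contra hji
        push_neg at hji
        have h1 := hpd j hj.1
        have h2 := hmono j i (by omega) (by omega)
        omega
      have := Finset.card_le_card hsub
      rw [Nat.card_Ico] at this
      omega
end

section
/- If a 2-Visits instance has a feasible schedule, then it has a feasible schedule in which every secondary visit is placed at a gap position (equivalently, every primary visit is placed at a position belonging to the discretized sequence). -/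
lemma disc_succ (d : ℕ → ℕ) (n : ℕ) {q : ℕ} (hq : q + 1 < n) :
    disc d n q = min (disc d n (q + 1) - 1) (d q) := by
  have h1 : n - 1 - q = (n - 1 - (q + 1)) + 1 := by omega
  have h2 : n - 1 - ((n - 1 - (q + 1)) + 1) = q := by omega
  show discAux d n (n - 1 - q) = _
  rw [h1]
  show min (discAux d n (n - 1 - (q + 1)) - 1) (d (n - 1 - ((n - 1 - (q + 1)) + 1))) = _
  rw [h2]
  rfl

lemma disc_le_d (d : ℕ → ℕ) (n : ℕ) {q : ℕ} (hq : q < n) : disc d n q ≤ d q := by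
  rcases Nat.lt_or_ge (q + 1) n with h | h
  · rw [disc_succ d n h]; exact min_le_right _ _
  · have hq' : q = n - 1 := by omega
    rw [hq', disc_last]

lemma disc_lt_succ (d : ℕ → ℕ) (n : ℕ) (hapos : ∀ i < n, 0 < disc d n i)
    {q : ℕ} (hq : q + 1 < n) : disc d n q < disc d n (q + 1) := by
  have h1 := hapos (q + 1) hq
  have h2 := min_le_left (disc d n (q + 1) - 1) (d q)
  rw [disc_succ d n hq]
  omega

lemma disc_strict (d : ℕ → ℕ) (n : ℕ) (hapos : ∀ i < n, 0 < disc d n i) :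
    ∀ j, j < n → ∀ i, i < j → disc d n i < disc d n j := by
  intro j
  induction j with
  | zero => intro _ i hi; omega
  | succ m ih =>
    intro hj i hi
    have hm : m < n := by omega
    have hstep : disc d n m < disc d n (m + 1) := disc_lt_succ d n hapos hj
    rcases Nat.lt_or_ge i m with h | h
    · exact (ih hm i h).trans hstep
    · have : i = m := by omega
      rw [this]; exact hstep

lemma tight_aux (d : ℕ → ℕ) (n : ℕ) (hapos : ∀ i < n, 0 < disc d n i) :
    ∀ k, k < n → ∃ k', k' ≤ k ∧ d (n - 1 - k') ≤ discAux d n k + (k - k') := by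
  intro k
  induction k with
  | zero => intro _; exact ⟨0, le_refl 0, by simp [discAux]⟩
  | succ k ih =>
    intro hk1
    have hk : k < n := by omega
    have hpos : 0 < discAux d n (k + 1) := by
      have h1 : n - 1 - (n - 1 - (k + 1)) = k + 1 := by omega
      have h2 := hapos (n - 1 - (k + 1)) (by omega)
      unfold disc at h2
      rw [h1] at h2
      exact h2
    rcases le_or_gt (d (n - 1 - (k + 1))) (discAux d n k - 1) with hb | hb
    · refine ⟨k + 1, le_refl _, ?_⟩
      have heq : discAux d n (k + 1) = d (n - 1 - (k + 1)) := by
        show min (discAux d n k - 1) (d (n - 1 - (k + 1))) = _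
        exact min_eq_right hb
      omega
    · have heq : discAux d n (k + 1) = discAux d n k - 1 := by
        show min (discAux d n k - 1) (d (n - 1 - (k + 1))) = _
        exact min_eq_left hb.le
      obtain ⟨k', hk', hd⟩ := ih hk
      exact ⟨k', by omega, by omega⟩

lemma tight (d : ℕ → ℕ) (n : ℕ) (hapos : ∀ i < n, 0 < disc d n i)
    (q : ℕ) (hq : q < n) :
    ∃ m, q ≤ m ∧ m < n ∧ d m ≤ disc d n q + (m - q) := by
  obtain ⟨k', hk', hd⟩ := tight_aux d n hapos (n - 1 - q) (by omega)
  refine ⟨n - 1 - k', by omega, by omega, ?_⟩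
  have he : disc d n q = discAux d n (n - 1 - q) := rfl
  omega

theorem stmt_5 (n : ℕ) (d : ℕ → ℕ)
    (hmono : ∀ i j, i ≤ j → j < n → d i ≤ d j)
    (hapos : ∀ i < n, 0 < disc d n i)
    (hle : ∀ i < n, d i ≤ 2 * n)
    (h : ∃ p s : ℕ → ℕ, Feasible2V n d p s) :
    ∃ p s : ℕ → ℕ, Feasible2V n d p s ∧ ∀ i < n, ∃ j < n, p i = disc d n j := by
  classical
  set V : Set ℕ :=
    {v | ∃ p s : ℕ → ℕ, Feasible2V n d p s ∧ v = ∑ j ∈ Finset.range n, p j} with hV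
  have hne : V.Nonempty := by
    obtain ⟨p, s, hf⟩ := h
    exact ⟨_, p, s, hf, rfl⟩
  have hbdd : BddAbove V := by
    refine ⟨2 * n * n, ?_⟩
    rintro v ⟨p, s, hf, rfl⟩
    calc ∑ j ∈ Finset.range n, p j ≤ ∑ _j ∈ Finset.range n, (2 * n) :=
          Finset.sum_le_sum (fun j hj => (hf.1 j (Finset.mem_range.mp hj)).2.1)
      _ = n * (2 * n) := by rw [Finset.sum_const, Finset.card_range, smul_eq_mul]
      _ ≤ 2 * n * n := by ring_nf; omega
  obtain ⟨p, s, hf, hsum⟩ := Nat.sSup_mem hne hbdd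
  obtain ⟨hR, hPP, hSS, hPS, hPd, hS⟩ := hf
  -- card facts
  have hinjP : Set.InjOn p (Finset.range n) := by
    intro i hi j hj hij
    by_contra hne'
    exact hPP i (Finset.mem_range.mp (by simpa using hi)) j
      (Finset.mem_range.mp (by simpa using hj)) hne' hij
  have hinjS : Set.InjOn s (Finset.range n) := by
    intro i hi j hj hij
    by_contra hne'
    exact hSS i (Finset.mem_range.mp (by simpa using hi)) j
      (Finset.mem_range.mp (by simpa using hj)) hne' hij
  have hcardP : ((Finset.range n).image p).card = n := by
    rw [Finset.card_image_of_injOn hinjP, Finset.card_range]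
  have hcardS : ((Finset.range n).image s).card = n := by
    rw [Finset.card_image_of_injOn hinjS, Finset.card_range]
  -- every disc value is a primary
  have hA : ∀ q, q < n → ∃ j, j < n ∧ p j = disc d n q := by
    intro q hq
    by_contra hcon
    push_neg at hcon
    -- a small primary exists among tasks ≥ q
    have hex : ∃ j, q ≤ j ∧ j < n ∧ p j ≤ disc d n q := by
      by_contra hcon2
      push_neg at hcon2
      obtain ⟨m, hqm, hmn, hdm⟩ := tight d n hapos q hq
      have hmaps : ∀ j ∈ Finset.Icc q m, p j ∈ Finset.Icc (disc d n q + 1) (d m) := by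
        intro j hj
        rw [Finset.mem_Icc] at hj ⊢
        have hjn : j < n := lt_of_le_of_lt hj.2 hmn
        refine ⟨hcon2 j hj.1 hjn, (hPd j hjn).trans (hmono j m hj.2 hmn)⟩
      have hinj : Set.InjOn p (Finset.Icc q m) := by
        intro i hi j hj hij
        by_contra hne'
        rw [Finset.coe_Icc, Set.mem_Icc] at hi hj
        exact hPP i (by omega) j (by omega) hne' hij
      have hcard := Finset.card_le_card_of_injOn p hmaps hinj
      rw [Nat.card_Icc, Nat.card_Icc] at hcard
      omega
    obtain ⟨j₀, hqj, hjn, hple⟩ := hex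
    have hplt : p j₀ < disc d n q := lt_of_le_of_ne hple (hcon j₀ hjn)
    have hx1 : 1 ≤ disc d n q := hapos q hq
    have hx2 : disc d n q ≤ 2 * n := (disc_le_d d n hq).trans (hle q hq)
    have hxd : disc d n q ≤ d j₀ := (disc_le_d d n hq).trans (hmono q j₀ hqj hjn)
    -- the slot `disc d n q` is occupied by some secondary
    have hcover : ∃ j, j < n ∧ s j = disc d n q := by
      have hsub : (Finset.range n).image p ∪ (Finset.range n).image s
          ⊆ Finset.Icc 1 (2 * n) := by
        intro y hy
        rcases Finset.mem_union.mp hy with hy | hy <;>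
          · rw [Finset.mem_image] at hy
            obtain ⟨j, hj, rfl⟩ := hy
            rw [Finset.mem_range] at hj
            have := hR j hj
            exact Finset.mem_Icc.mpr ⟨by omega, by omega⟩
      have hdisj : Disjoint ((Finset.range n).image p) ((Finset.range n).image s) := by
        rw [Finset.disjoint_left]
        intro y hyp hys
        rw [Finset.mem_image] at hyp hys
        obtain ⟨i, hi, rfl⟩ := hyp
        obtain ⟨j, hj, hji⟩ := hys
        exact hPS i (Finset.mem_range.mp hi) j (Finset.mem_range.mp hj) hji.symm
      have hcardU : ((Finset.range n).image p ∪ (Finset.range n).image s).card = 2 * n := by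
        rw [Finset.card_union_of_disjoint hdisj, hcardP, hcardS]; omega
      have hcardI : (Finset.Icc 1 (2 * n)).card = 2 * n := by
        rw [Nat.card_Icc]; omega
      have hequ := Finset.eq_of_subset_of_card_le hsub (by omega)
      have hmem : disc d n q ∈ Finset.Icc 1 (2 * n) := Finset.mem_Icc.mpr ⟨hx1, hx2⟩
      rw [← hequ] at hmem
      rcases Finset.mem_union.mp hmem with hy | hy
      · exfalso
        rw [Finset.mem_image] at hy
        obtain ⟨j, hj, hje⟩ := hy
        exact hcon j (Finset.mem_range.mp hj) hje
      · rw [Finset.mem_image] at hy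
        obtain ⟨j, hj, hje⟩ := hy
        exact ⟨j, Finset.mem_range.mp hj, hje⟩
    obtain ⟨j₁, hj1n, hs1⟩ := hcover
    -- the improved schedule
    have hf' : Feasible2V n d (Function.update p j₀ (disc d n q))
        (Function.update s j₁ (p j₀)) := by
      have hRj₀ := hR j₀ hjn
      refine ⟨?_, ?_, ?_, ?_, ?_, ?_⟩
      · intro i hi
        simp only [Function.update_apply]
        have := hR i hi
        split_ifs <;> omega
      · intro i hi j hj hij
        simp only [Function.update_apply]
        split_ifs with h1 h2 h2
        · omega
        · exact fun he => hcon j hj he.symm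
        · exact hcon i hi
        · exact hPP i hi j hj hij
      · intro i hi j hj hij
        simp only [Function.update_apply]
        split_ifs with h1 h2 h2
        · omega
        · exact hPS j₀ hjn j hj
        · exact fun he => hPS j₀ hjn i hi he.symm
        · exact hSS i hi j hj hij
      · intro i hi j hj
        simp only [Function.update_apply]
        split_ifs with h1 h2 h2
        · exact hplt.ne'
        · intro he
          exact hSS j₁ hj1n j hj (fun hh => h2 hh.symm) (hs1.trans he)
        · exact hPP i hi j₀ hjn h1
        · exact hPS i hi j hj
      · intro i hi
        simp only [Function.update_apply]
        split_ifs with h1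
        · rw [h1]; exact hxd
        · exact hPd i hi
      · intro i hi
        simp only [Function.update_apply]
        have hSi := hS i hi
        split_ifs with h1 h2 h2
        · exact Or.inl hplt
        · have hsx : s i = disc d n q := by rw [h1]; exact hs1
          omega
        · have hpi : p i = p j₀ := by rw [h2]
          omega
        · exact hSi
    have hjmem : j₀ ∈ Finset.range n := Finset.mem_range.mpr hjn
    have h1 : ∑ j ∈ Finset.range n, Function.update p j₀ (disc d n q) j
        = disc d n q + ∑ j ∈ Finset.range n \ {j₀}, p j :=
      Finset.sum_update_of_mem hjmem p (disc d n q)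
    have h2 : ∑ j ∈ Finset.range n, p j = p j₀ + ∑ j ∈ Finset.range n \ {j₀}, p j := by
      rw [← Finset.erase_eq]
      exact (Finset.add_sum_erase _ p hjmem).symm
    have h3 : ∑ j ∈ Finset.range n, Function.update p j₀ (disc d n q) j ≤ sSup V :=
      le_csSup hbdd ⟨_, _, hf', rfl⟩
    omega
  refine ⟨p, s, ⟨hR, hPP, hSS, hPS, hPd, hS⟩, ?_⟩
  -- images coincide
  have hAf : (Finset.range n).image (disc d n) ⊆ (Finset.range n).image p := by
    intro x hx
    rw [Finset.mem_image] at hx ⊢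
    obtain ⟨q, hq, rfl⟩ := hx
    obtain ⟨j, hj, hpj⟩ := hA q (Finset.mem_range.mp hq)
    exact ⟨j, Finset.mem_range.mpr hj, hpj⟩
  have hinjA : Set.InjOn (disc d n) (Finset.range n) := by
    intro i hi j hj hij
    by_contra hne'
    rw [Finset.coe_range, Set.mem_Iio] at hi hj
    rcases Nat.lt_or_ge i j with h | h
    · exact absurd hij (disc_strict d n hapos j hj i h).ne
    · have h' : j < i := by omega
      exact absurd hij.symm (disc_strict d n hapos i hi j h').ne
  have hcardA : ((Finset.range n).image (disc d n)).card = n := by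
    rw [Finset.card_image_of_injOn hinjA, Finset.card_range]
  have hequ := Finset.eq_of_subset_of_card_le hAf (by omega)
  intro i hi
  have hmem : p i ∈ (Finset.range n).image p :=
    Finset.mem_image_of_mem p (Finset.mem_range.mpr hi)
  rw [← hequ, Finset.mem_image] at hmem
  obtain ⟨q, hq, hqe⟩ := hmem
  exact ⟨q, Finset.mem_range.mp hq, hqe.symm⟩
end

section
/- Let C_1 and C_2 be clusters of the discretized sequence with C_1 preceding C_2. In any feasible 2-Visits schedule in which no primary visit is placed at a gap, if task u has its primary visit at a position in C_1 and task v has its primary visit at a position in C_2, then the induced deadline of u is strictly smaller than the induced deadline of v. -/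
lemma disc_rec (d : ℕ → ℕ) (n i : ℕ) (h : i + 1 < n) :
    disc d n i = min (disc d n (i + 1) - 1) (d i) := by
  unfold disc
  have h1 : n - 1 - i = (n - 1 - (i + 1)) + 1 := by omega
  rw [h1, discAux]
  have h2 : n - 1 - ((n - 1 - (i + 1)) + 1) = i := by omega
  rw [h2]

lemma disc_succ_lt (d : ℕ → ℕ) (n : ℕ) (hapos : ∀ i < n, 0 < disc d n i)
    (i : ℕ) (h : i + 1 < n) : disc d n i < disc d n (i + 1) := by
  have h1 := disc_rec d n i h
  have h2 := hapos (i + 1) h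
  omega

lemma disc_lt (d : ℕ → ℕ) (n : ℕ) (hapos : ∀ i < n, 0 < disc d n i)
    {i j : ℕ} (hij : i < j) (hj : j < n) : disc d n i < disc d n j := by
  have key : ∀ j, j < n → ∀ i, i < j → disc d n i < disc d n j := by
    intro j
    induction j with
    | zero => omega
    | succ k ih =>
      intro hj2 i2 hij2
      rcases Nat.lt_succ_iff_lt_or_eq.mp hij2 with h | h
      · exact lt_trans (ih (by omega) i2 h) (disc_succ_lt d n hapos k hj2)
      · rw [h]; exact disc_succ_lt d n hapos k hj2
  exact key j hj i hij

lemma disc_le_of_le (d : ℕ → ℕ) (n : ℕ) (hapos : ∀ i < n, 0 < disc d n i)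
    {i j : ℕ} (hij : i ≤ j) (hj : j < n) : disc d n i ≤ disc d n j := by
  rcases eq_or_lt_of_le hij with h | h
  · subst h; exact le_rfl
  · exact le_of_lt (disc_lt d n hapos h hj)

theorem stmt_9 (n : ℕ) (d p s : ℕ → ℕ)
    (hmono : ∀ i j, i ≤ j → j < n → d i ≤ d j)
    (hapos : ∀ i < n, 0 < disc d n i)
    (hle : ∀ i < n, d i ≤ 2 * n)
    (hf : Feasible2V n d p s)
    (hprim : ∀ i < n, ∃ m < n, p i = disc d n m)
    (l1 h1 l2 h2 : ℕ) (h11 : l1 ≤ h1) (h12 : h1 < l2) (h22 : l2 ≤ h2) (h2n : h2 < n)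
    (hconsec1 : ∀ m, l1 ≤ m → m < h1 → disc d n (m + 1) = disc d n m + 1)
    (hleft1 : l1 = 0 ∨ disc d n l1 ≠ disc d n (l1 - 1) + 1)
    (hright1 : h1 = n - 1 ∨ disc d n (h1 + 1) ≠ disc d n h1 + 1)
    (hconsec2 : ∀ m, l2 ≤ m → m < h2 → disc d n (m + 1) = disc d n m + 1)
    (hleft2 : l2 = 0 ∨ disc d n l2 ≠ disc d n (l2 - 1) + 1)
    (hright2 : h2 = n - 1 ∨ disc d n (h2 + 1) ≠ disc d n h2 + 1)
    (u v : ℕ) (hu : u < n) (hv : v < n)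
    (hpu : ∃ m, l1 ≤ m ∧ m ≤ h1 ∧ p u = disc d n m)
    (hpv : ∃ m, l2 ≤ m ∧ m ≤ h2 ∧ p v = disc d n m) :
    d u + p u < d v + p v := by
  obtain ⟨hrange, hpinj, hsinj, hps, hpd, hsec⟩ := hf
  obtain ⟨m1, hl1m, hmh1, hpum⟩ := hpu
  obtain ⟨m2, hl2m, hmh2, hpvm⟩ := hpv
  have hh1n : h1 + 1 < n := by omega
  -- at the right boundary of C1, disc h1 = d h1
  have hne : disc d n (h1 + 1) ≠ disc d n h1 + 1 := by
    rcases hright1 with h | h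
    · omega
    · exact h
  have hrec := disc_rec d n h1 hh1n
  have hpos1 := hapos (h1 + 1) hh1n
  have hdh1 : disc d n h1 = d h1 := by omega
  -- choose the primary slot index for each task
  choose σ hσ using hprim
  set g : ℕ → ℕ := fun i => if h : i < n then σ i h else 0 with hg
  have hgn : ∀ i (hi : i < n), g i < n ∧ p i = disc d n (g i) := by
    intro i hi
    simp only [hg, dif_pos hi]
    exact ⟨(hσ i hi).1, (hσ i hi).2⟩
  -- tasks with index ≤ h1 have primaries in positions ≤ h1
  have hsmall : ∀ i, i ≤ h1 → g i ≤ h1 := by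
    intro i hi
    have hin : i < n := by omega
    obtain ⟨hgin, hgip⟩ := hgn i hin
    by_contra hgt
    push_neg at hgt
    have h1lt : disc d n h1 < disc d n (g i) := disc_lt d n hapos hgt hgin
    have : p i ≤ d i := hpd i hin
    have : d i ≤ d h1 := hmono i h1 hi (by omega)
    omega
  -- g is injective on range (h1+1)
  have hinj : ∀ a₁ ∈ Finset.range (h1 + 1), ∀ a₂ ∈ Finset.range (h1 + 1),
      g a₁ = g a₂ → a₁ = a₂ := by
    intro a₁ ha₁ a₂ ha₂ heq
    simp only [Finset.mem_range] at ha₁ ha₂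
    have h₁n : a₁ < n := by omega
    have h₂n : a₂ < n := by omega
    by_contra hne'
    exact hpinj a₁ h₁n a₂ h₂n hne' (by rw [(hgn a₁ h₁n).2, (hgn a₂ h₂n).2, heq])
  -- hence g is surjective from range (h1+1) onto itself; m1 is hit
  have hsurj := Finset.surj_on_of_inj_on_of_card_le (fun a _ => g a)
    (fun a ha => by
      simp only [Finset.mem_range] at ha ⊢
      exact Nat.lt_succ_of_le (hsmall a (by omega)))
    (fun a₁ a₂ ha₁ ha₂ h => hinj a₁ ha₁ a₂ ha₂ h) le_rfl
  obtain ⟨i, hi, hgi⟩ := hsurj m1 (Finset.mem_range.mpr (by omega))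
  simp only [Finset.mem_range] at hi
  have hin : i < n := by omega
  have hgi' : m1 = g i := hgi
  -- p i = p u, so i = u, so u ≤ h1
  have hpi : p i = p u := by rw [(hgn i hin).2, ← hgi', hpum]
  have hiu : i = u := by
    by_contra hne'
    exact hpinj i hin u hu hne' hpi
  have hu1 : u ≤ h1 := by omega
  -- put the inequalities together
  have hdu : d u ≤ d h1 := hmono u h1 hu1 (by omega)
  have hpu1 : p u ≤ disc d n h1 := by
    rw [hpum]; exact disc_le_of_le d n hapos hmh1 (by omega)
  have hlt : disc d n h1 < disc d n m2 := disc_lt d n hapos (by omega) (by omega)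
  have hpvd : p v ≤ d v := hpd v hv
  have hpveq : p v = disc d n m2 := hpvm
  omega
end

section
/- A Position Matching instance (D, A, T) in which all elements of D are distinct has a solution if and only if the identity matching (pairing d_i with a_i for each i, and assigning the i-th smallest target t to the pair with i-th smallest sum d_i + a_i) satisfies d_i + a_i ≥ t for every such pairing; moreover, in this case A = D and the matching of d_i to a_j is feasible only for j = i. -/
/-- A solution of a Position Matching instance `(d, a, t)` of size `n`:
a pair of perfect matchings (permutations) such that each deadline `d i` is matched
with a position `a (π i) ≤ d i` and a target `t (τ i)` with `d i + a (π i) ≥ t (τ i)`. -/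
def PMSolution (n : ℕ) (d a t : ℕ → ℕ) : Prop :=
  ∃ π τ : Equiv.Perm (Fin n), ∀ i : Fin n,
    a ((π i : ℕ)) ≤ d (i : ℕ) ∧ t ((τ i : ℕ)) ≤ d (i : ℕ) + a ((π i : ℕ))

lemma discAux_eq (d : ℕ → ℕ) (n : ℕ)
    (hd : ∀ i j, i < j → j < n → d i < d j) :
    ∀ k, k ≤ n - 1 → discAux d n k = d (n - 1 - k) := by
  intro k
  induction k with
  | zero => intro _; simp [discAux]
  | succ k ih =>
    intro hk
    rw [discAux, ih (by omega)]
    have h1 : d (n - 1 - (k + 1)) < d (n - 1 - k) :=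
      hd _ _ (by omega) (by omega)
    omega

lemma disc_eq (d : ℕ → ℕ) (n : ℕ)
    (hd : ∀ i j, i < j → j < n → d i < d j) :
    ∀ i < n, disc d n i = d i := by
  intro i hi
  have h := discAux_eq d n hd (n - 1 - i) (by omega)
  rw [disc, h]
  congr 1
  omega

lemma perm_eq_one (n : ℕ) (π : Equiv.Perm (Fin n))
    (h : ∀ i : Fin n, (π i : ℕ) ≤ (i : ℕ)) : π = 1 := by
  have key : ∀ m : ℕ, ∀ i : Fin n, (i : ℕ) = m → π i = i := by
    intro m
    induction m using Nat.strong_induction_on with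
    | _ m ih =>
      intro i hi
      rcases lt_or_eq_of_le (h i) with hlt | heq
      · exfalso
        have h2 : π (π i) = π i := ih ((π i : ℕ)) (by omega) (π i) rfl
        have h3 : π i = i := π.injective h2
        rw [h3] at hlt
        exact lt_irrefl _ hlt
      · exact Fin.ext heq
  ext i
  exact congrArg Fin.val (key (i : ℕ) i rfl)

theorem stmt_10 (n : ℕ) (d t : ℕ → ℕ)
    (hpos : ∀ i < n, 0 < d i)
    (hd : ∀ i j, i < j → j < n → d i < d j)
    (htpos : ∀ i < n, 0 < t i)
    (ht : ∀ i j, i < j → j < n → t i < t j) :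
    (PMSolution n d (disc d n) t ↔ ∀ i < n, t i ≤ d i + disc d n i) ∧
    (∀ i < n, disc d n i = d i) ∧
    (∀ π : Equiv.Perm (Fin n), (∀ i : Fin n, disc d n ((π i : ℕ)) ≤ d (i : ℕ)) → π = 1) := by
  have hdisc := disc_eq d n hd
  have hmono : ∀ i j, i ≤ j → j < n → d i ≤ d j := by
    intro i j hij hj
    rcases lt_or_eq_of_le hij with h | h
    · exact le_of_lt (hd i j h hj)
    · rw [h]
  have htmono : ∀ i j, i ≤ j → j < n → t i ≤ t j := by
    intro i j hij hj
    rcases lt_or_eq_of_le hij with h | h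
    · exact le_of_lt (ht i j h hj)
    · rw [h]
  have part3 : ∀ π : Equiv.Perm (Fin n),
      (∀ i : Fin n, disc d n ((π i : ℕ)) ≤ d (i : ℕ)) → π = 1 := by
    intro π hπ
    apply perm_eq_one
    intro i
    by_contra hc
    push_neg at hc
    have h1 : d (i : ℕ) < d ((π i : ℕ)) := hd _ _ hc (π i).isLt
    have h2 := hπ i
    rw [hdisc _ (π i).isLt] at h2
    omega
  refine ⟨⟨?_, ?_⟩, hdisc, part3⟩
  · rintro ⟨π, τ, hall⟩ i hi
    have hπ1 : π = 1 := part3 π (fun j => (hall j).1)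
    subst hπ1
    -- pigeonhole: ∃ j ≤ i with i ≤ τ j
    set i0 : Fin n := ⟨i, hi⟩ with hi0
    have hj : ∃ j : Fin n, (j : ℕ) ≤ i ∧ i ≤ (τ j : ℕ) := by
      by_contra hc
      push_neg at hc
      have hmaps : ∀ j ∈ Finset.Iic i0, τ j ∈ Finset.Iio i0 := by
        intro j hjm
        rw [Finset.mem_Iic] at hjm
        rw [Finset.mem_Iio]
        have := hc j (by exact_mod_cast hjm)
        exact_mod_cast this
      have hcard := Finset.card_le_card_of_injOn τ hmaps
        (fun a _ b _ hab => τ.injective hab)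
      rw [Fin.card_Iic, Fin.card_Iio] at hcard
      simp only [hi0] at hcard
      omega
    obtain ⟨j, hji, hij⟩ := hj
    have hspec := (hall j).2
    simp only [Equiv.Perm.one_apply] at hspec
    rw [hdisc _ j.isLt] at hspec
    have h1 : t i ≤ t ((τ j : ℕ)) := htmono _ _ hij (τ j).isLt
    have h2 : d (j : ℕ) ≤ d i := hmono _ _ hji hi
    rw [hdisc i hi]
    omega
  · intro h
    refine ⟨1, 1, fun i => ?_⟩
    simp only [Equiv.Perm.one_apply]
    have h' := h (i : ℕ) i.isLt
    rw [hdisc _ i.isLt] at h' ⊢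
    exact ⟨le_refl _, h'⟩
end

section
/- A Position Matching instance (D, A, T) in which all elements of D are equal to a single value x has a solution if and only if x + a_i ≥ t_i for every i, where a_1 < ... < a_n are the elements of A and t_1 < ... < t_n are the elements of T in sorted order. -/
lemma discAux_const (x n : ℕ) : ∀ k, discAux (fun _ => x) n k = x - k := by
  intro k
  induction k with
  | zero => rfl
  | succ k ih => simp [discAux, ih, Nat.sub_sub, min_eq_left (Nat.sub_le x (k+1))]

lemma disc_const (x n i : ℕ) : disc (fun _ => x) n i = x - (n - 1 - i) := by
  simp [disc, discAux_const]

lemma disc_const_mono (x n : ℕ) {i j : ℕ} (h : i ≤ j) :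
    disc (fun _ => x) n i ≤ disc (fun _ => x) n j := by
  rw [disc_const, disc_const]
  exact Nat.sub_le_sub_left (Nat.sub_le_sub_left h _) x

theorem stmt_13 (n x : ℕ) (t : ℕ → ℕ) (hx : 0 < x)
    (hapos : ∀ i < n, 0 < disc (fun _ => x) n i)
    (htpos : ∀ i < n, 0 < t i)
    (ht : ∀ i j, i < j → j < n → t i < t j) :
    PMSolution n (fun _ => x) (disc (fun _ => x) n) t ↔
      ∀ i < n, t i ≤ x + disc (fun _ => x) n i := by
  constructor
  · rintro ⟨π, τ, h⟩ j hj
    set jf : Fin n := ⟨j, hj⟩ with hjf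
    -- pigeonhole: ∃ i, jf ≤ τ i ∧ π i ≤ jf
    have hA : (Finset.univ.filter (fun i => jf ≤ τ i)).card = n - j := by
      rw [← Fin.card_Ici jf]
      apply Finset.card_bij (fun i _ => τ i)
      · intro a ha
        simp only [Finset.mem_filter] at ha
        simpa using ha.2
      · intro a _ b _ hab
        exact τ.injective hab
      · intro b hb
        refine ⟨τ.symm b, ?_, by simp⟩
        simp only [Finset.mem_filter, Finset.mem_univ, true_and, Equiv.apply_symm_apply]
        simpa using hb
    have hB : (Finset.univ.filter (fun i => π i ≤ jf)).card = j + 1 := by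
      rw [← Fin.card_Iic jf]
      apply Finset.card_bij (fun i _ => π i)
      · intro a ha
        simp only [Finset.mem_filter] at ha
        simpa using ha.2
      · intro a _ b _ hab
        exact π.injective hab
      · intro b hb
        refine ⟨π.symm b, ?_, by simp⟩
        simp only [Finset.mem_filter, Finset.mem_univ, true_and, Equiv.apply_symm_apply]
        simpa using hb
    have hcard : ((Finset.univ.filter (fun i => jf ≤ τ i)) ∩
        (Finset.univ.filter (fun i => π i ≤ jf))).Nonempty := by
      rw [← Finset.card_pos]
      have hunion := Finset.card_union_add_card_inter
        (Finset.univ.filter (fun i => jf ≤ τ i)) (Finset.univ.filter (fun i => π i ≤ jf))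
      have hle : (Finset.univ.filter (fun i => jf ≤ τ i) ∪
          Finset.univ.filter (fun i => π i ≤ jf)).card ≤ n := by
        have := Finset.card_le_univ (Finset.univ.filter (fun i => jf ≤ τ i) ∪
          Finset.univ.filter (fun i => π i ≤ jf))
        simpa using this
      omega
    obtain ⟨i, hi⟩ := hcard
    simp only [Finset.mem_inter, Finset.mem_filter] at hi
    have h1 : j ≤ (τ i : ℕ) := hi.1.2
    have h2 : (π i : ℕ) ≤ j := hi.2.2
    have htj : t j ≤ t (τ i : ℕ) := by
      rcases eq_or_lt_of_le h1 with he | hl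
      · rw [he]
      · exact le_of_lt (ht j _ hl (τ i).2)
    calc t j ≤ t (τ i : ℕ) := htj
      _ ≤ x + disc (fun _ => x) n (π i : ℕ) := (h i).2
      _ ≤ x + disc (fun _ => x) n j := by
          exact Nat.add_le_add_left (disc_const_mono x n h2) x
  · intro h
    refine ⟨Equiv.refl _, Equiv.refl _, fun i => ⟨?_, ?_⟩⟩
    · rw [disc_const]; exact Nat.sub_le _ _
    · exact h i i.2
end

section
/- Let (A, B, T) be an Inequality Numerical 3-Dimensional Matching instance arising from a Restricted Numerical 3DM instance (A, B, C, σ) via T = {σ - c : c ∈ C}, where B = C = {1,...,n} and Σ_{i=1}^n (a_i + 2i) = nσ. Then there exists a perfect matching M ⊆ A × B × T with a + b ≥ t for all (a,b,t) ∈ M if and only if there exists a perfect matching M' ⊆ A × B × C with a + b + c = σ for all (a,b,c) ∈ M'. -/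
theorem stmt_14 (n : ℕ) (a : ℕ → ℕ) (σ : ℕ)
    (hpos : ∀ i < n, 0 < a i)
    (hsum : ∑ i ∈ Finset.range n, (a i + 2 * (i + 1)) = n * σ) :
    (∃ π τ : Equiv.Perm (Fin n), ∀ i : Fin n,
        σ - ((τ i : ℕ) + 1) ≤ a (i : ℕ) + ((π i : ℕ) + 1)) ↔
      (∃ π ρ : Equiv.Perm (Fin n), ∀ i : Fin n,
        a (i : ℕ) + ((π i : ℕ) + 1) + ((ρ i : ℕ) + 1) = σ) := by
  constructor
  · rintro ⟨π, τ, h⟩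
    refine ⟨π, τ, ?_⟩
    set f : Fin n → ℕ := fun i => a (i : ℕ) + ((π i : ℕ) + 1) + ((τ i : ℕ) + 1) with hf
    have hge : ∀ i : Fin n, σ ≤ f i := by
      intro i
      have := h i
      show σ ≤ a (i : ℕ) + ((π i : ℕ) + 1) + ((τ i : ℕ) + 1)
      omega
    have hsumf : ∑ i : Fin n, f i = n * σ := by
      have h1 : ∑ i : Fin n, ((π i : ℕ) + 1) = ∑ i : Fin n, ((i : ℕ) + 1) :=
        Equiv.sum_comp π (fun i : Fin n => (i : ℕ) + 1)
      have h2 : ∑ i : Fin n, ((τ i : ℕ) + 1) = ∑ i : Fin n, ((i : ℕ) + 1) :=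
        Equiv.sum_comp τ (fun i : Fin n => (i : ℕ) + 1)
      calc ∑ i : Fin n, f i
          = ∑ i : Fin n, a (i : ℕ) + ∑ i : Fin n, ((π i : ℕ) + 1)
              + ∑ i : Fin n, ((τ i : ℕ) + 1) := by
            simp [hf, Finset.sum_add_distrib]
        _ = ∑ i : Fin n, (a (i : ℕ) + 2 * ((i : ℕ) + 1)) := by
            rw [h1, h2]
            simp [Finset.sum_add_distrib, Finset.mul_sum, two_mul]
            ring
        _ = ∑ i ∈ Finset.range n, (a i + 2 * (i + 1)) :=
            (Finset.sum_range fun i => a i + 2 * (i + 1)).symm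
        _ = n * σ := hsum
    have hzero : ∑ i : Fin n, (f i - σ) = 0 := by
      have := Finset.sum_tsub_distrib (s := Finset.univ) (f := f)
        (g := fun _ : Fin n => σ) (fun i _ => hge i)
      simp [this, hsumf, mul_comm]
    intro i
    have h3 := Finset.sum_eq_zero_iff.mp hzero i (Finset.mem_univ i)
    have h4 := hge i
    simp only [hf] at h3 h4
    omega
  · rintro ⟨π, ρ, h⟩
    exact ⟨π, ρ, fun i => by have := h i; omega⟩
end

section
/- In the reduction from IN3DM to Position Matching, the constructed sequence A* (consisting of the n elements of A, each satisfying n ≤ a < 3n, together with 3n copies of 4n, sorted non-decreasingly) has discretized sequence exactly ⟨1, 2, ..., 4n⟩. -/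
theorem stmt_16 (n : ℕ) (hn : 0 < n) (d : ℕ → ℕ)
    (hmono : ∀ i j, i ≤ j → j < 4 * n → d i ≤ d j)
    (hsmall : ∀ i < n, n ≤ d i ∧ d i < 3 * n)
    (hdummy : ∀ i, n ≤ i → i < 4 * n → d i = 4 * n) :
    ∀ i < 4 * n, disc d (4 * n) i = i + 1 := by
  have key : ∀ k, k < 4 * n → discAux d (4 * n) k = 4 * n - k := by
    intro k
    induction k with
    | zero =>
      intro _
      simp [discAux, hdummy (4 * n - 1) (by omega) (by omega)]
    | succ k ih =>
      intro hk
      have hik := ih (by omega)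
      have hd : 4 * n - k - 1 ≤ d (4 * n - 1 - (k + 1)) := by
        by_cases hj : n ≤ 4 * n - 1 - (k + 1)
        · rw [hdummy _ hj (by omega)]; omega
        · have := (hsmall (4 * n - 1 - (k + 1)) (by omega)).1; omega
      simp only [discAux, hik]
      omega
  intro i hi
  have := key (4 * n - 1 - i) (by omega)
  unfold disc
  omega
end

section
/- In a Position Matching instance (D, A, T) where D consists of n 'small' elements each in [n, 3n) followed by 3n copies of 4n, A = ⟨1,...,4n⟩, and T consists of n small targets each at most 4n together with all integers in {5n+1,...,8n}: in any solution, each copy of 4n in D must be matched with one of the positions {n+1,...,4n} of A and the dummy targets {5n+1,...,8n}, and consequently the instance has a solution if and only if the small elements of D can be matched with positions {1,...,n} and the small targets so that d + b ≥ t for each triple. -/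
lemma my_disc_eq (n : ℕ) (hn : 0 < n) (d : ℕ → ℕ)
    (hsmall : ∀ i < n, n ≤ d i ∧ d i < 3 * n)
    (hdummy : ∀ i, n ≤ i → i < 4 * n → d i = 4 * n) :
    ∀ i < 4 * n, disc d (4 * n) i = i + 1 := by
  have haux : ∀ k < 4 * n, discAux d (4 * n) k = 4 * n - k := by
    intro k
    induction k with
    | zero =>
      intro _
      simp only [discAux]
      rw [hdummy (4*n-1) (by omega) (by omega)]; omega
    | succ k ih =>
      intro hk
      have h1 := ih (by omega)
      rw [discAux, h1]
      rcases lt_or_ge (4*n - 1 - (k+1)) n with h | h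
      · have := (hsmall _ h).1
        omega
      · have := hdummy _ h (by omega)
        omega
  intro i hi
  rw [disc, haux _ (by omega)]
  omega

theorem stmt_17 (n : ℕ) (hn : 0 < n) (d t : ℕ → ℕ)
    (hmono : ∀ i j, i ≤ j → j < 4 * n → d i ≤ d j)
    (hsmall : ∀ i < n, n ≤ d i ∧ d i < 3 * n)
    (hdummy : ∀ i, n ≤ i → i < 4 * n → d i = 4 * n)
    (htpos : ∀ i < n, 0 < t i) (htle : ∀ i < n, t i ≤ 4 * n)
    (htinj : ∀ i < 4 * n, ∀ j < 4 * n, t i = t j → i = j)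
    (htdummy : ∀ j < 3 * n, t (n + j) = 5 * n + j + 1) :
    (∀ π τ : Equiv.Perm (Fin (4 * n)),
        (∀ i : Fin (4 * n), disc d (4 * n) ((π i : ℕ)) ≤ d (i : ℕ) ∧
          t ((τ i : ℕ)) ≤ d (i : ℕ) + disc d (4 * n) ((π i : ℕ))) →
        ∀ i : Fin (4 * n), n ≤ (i : ℕ) → n ≤ (π i : ℕ) ∧ n ≤ (τ i : ℕ)) ∧
    (PMSolution (4 * n) d (disc d (4 * n)) t ↔
      ∃ π τ : Equiv.Perm (Fin n), ∀ i : Fin n,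
        t ((τ i : ℕ)) ≤ d (i : ℕ) + ((π i : ℕ) + 1)) := by
  have hdle : ∀ i < 4*n, d i ≤ 4*n := by
    intro i hi
    rcases lt_or_ge i n with h | h
    · have := (hsmall i h).2; omega
    · rw [hdummy i h hi]
  have hdisc := my_disc_eq n hn d hsmall hdummy
  -- cardinality of the dummy index set
  have hScard : (Finset.univ.filter (fun i : Fin (4*n) => n ≤ (i:ℕ))).card = 3*n := by
    have himg : (Finset.univ.filter (fun i : Fin (4*n) => n ≤ (i:ℕ))).image Fin.val
        = Finset.Ico n (4*n) := by
      ext j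
      simp only [Finset.mem_image, Finset.mem_filter, Finset.mem_univ, true_and,
        Finset.mem_Ico]
      constructor
      · rintro ⟨i, hi, rfl⟩; exact ⟨hi, i.isLt⟩
      · rintro ⟨h1, h2⟩; exact ⟨⟨j, h2⟩, h1, rfl⟩
    have hc := Finset.card_image_of_injective
      (Finset.univ.filter (fun i : Fin (4*n) => n ≤ (i:ℕ))) Fin.val_injective
    rw [himg, Nat.card_Ico] at hc
    omega
  have key : ∀ π τ : Equiv.Perm (Fin (4 * n)),
      (∀ i : Fin (4 * n), disc d (4 * n) ((π i : ℕ)) ≤ d (i : ℕ) ∧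
        t ((τ i : ℕ)) ≤ d (i : ℕ) + disc d (4 * n) ((π i : ℕ))) →
      ∀ i : Fin (4 * n), n ≤ (i : ℕ) → n ≤ (π i : ℕ) ∧ n ≤ (τ i : ℕ) := by
    intro π τ hsol
    have hc : ∀ i : Fin (4*n), ((π i : ℕ) + 1 ≤ d (i:ℕ)) ∧
        t ((τ i : ℕ)) ≤ d (i:ℕ) + ((π i : ℕ) + 1) := by
      intro i
      have h := hsol i
      rwa [hdisc _ (π i).isLt] at h
    set I : Finset (Fin (4*n)) := Finset.univ.filter (fun i => n ≤ ((τ i : ℕ))) with hI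
    have hImem : ∀ i : Fin (4*n), i ∈ I ↔ n ≤ (τ i : ℕ) := by
      intro i; simp [hI]
    have hτπ : ∀ i ∈ I, 4*n + (τ i : ℕ) ≤ d (i:ℕ) + (π i : ℕ) := by
      intro i hi
      have hτi : n ≤ (τ i : ℕ) := (hImem i).1 hi
      have h1 : (τ i : ℕ) - n < 3*n := by have := (τ i).isLt; omega
      have h2 := htdummy _ h1
      rw [show n + ((τ i:ℕ) - n) = (τ i : ℕ) by omega] at h2
      have := (hc i).2
      omega
    have hπge : ∀ i ∈ I, n ≤ (π i : ℕ) := by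
      intro i hi
      have h1 := hτπ i hi
      have h2 := hdle _ i.isLt
      have h3 : n ≤ (τ i : ℕ) := (hImem i).1 hi
      omega
    have hτinj : Function.Injective (fun i : Fin (4*n) => (τ i : ℕ)) :=
      fun a b h => τ.injective (Fin.val_injective h)
    have hπinj : Function.Injective (fun i : Fin (4*n) => (π i : ℕ)) :=
      fun a b h => π.injective (Fin.val_injective h)
    have hTsub : I.image (fun i => (τ i : ℕ)) ⊆ Finset.Ico n (4*n) := by
      intro x hx
      obtain ⟨i, hi, rfl⟩ := Finset.mem_image.1 hx
      exact Finset.mem_Ico.2 ⟨(hImem i).1 hi, (τ i).isLt⟩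
    have hcompl : (Finset.univ \ I).image (fun i => (τ i : ℕ)) ⊆ Finset.Ico 0 n := by
      intro x hx
      obtain ⟨i, hi, rfl⟩ := Finset.mem_image.1 hx
      have : ¬ n ≤ (τ i : ℕ) := by
        intro h
        exact (Finset.mem_sdiff.1 hi).2 ((hImem i).2 h)
      exact Finset.mem_Ico.2 ⟨Nat.zero_le _, by omega⟩
    have hIcard : I.card = 3*n := by
      have c1 : I.card ≤ 3*n := by
        have := Finset.card_le_card hTsub
        rw [Finset.card_image_of_injective I hτinj, Nat.card_Ico] at this
        omega
      have c2 : (Finset.univ \ I).card ≤ n := by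
        have := Finset.card_le_card hcompl
        rw [Finset.card_image_of_injective _ hτinj, Nat.card_Ico] at this
        omega
      have c3 : (Finset.univ \ I).card = (Finset.univ : Finset (Fin (4*n))).card - I.card :=
        Finset.card_sdiff_of_subset (Finset.subset_univ I)
      have c4 : (Finset.univ : Finset (Fin (4*n))).card = 4*n := by simp
      have c5 : I.card ≤ 4*n := by
        have := Finset.card_le_card (Finset.subset_univ I); omega
      omega
    have hTimg : I.image (fun i => (τ i : ℕ)) = Finset.Ico n (4*n) := by
      apply Finset.eq_of_subset_of_card_le hTsub
      rw [Finset.card_image_of_injective I hτinj, hIcard, Nat.card_Ico]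
      omega
    have hPsub : I.image (fun i => (π i : ℕ)) ⊆ Finset.Ico n (4*n) := by
      intro x hx
      obtain ⟨i, hi, rfl⟩ := Finset.mem_image.1 hx
      exact Finset.mem_Ico.2 ⟨hπge i hi, (π i).isLt⟩
    have hPimg : I.image (fun i => (π i : ℕ)) = Finset.Ico n (4*n) := by
      apply Finset.eq_of_subset_of_card_le hPsub
      rw [Finset.card_image_of_injective I hπinj, hIcard, Nat.card_Ico]
      omega
    have hsumτ : ∑ i ∈ I, (τ i : ℕ) = ∑ j ∈ Finset.Ico n (4*n), j := by
      rw [← hTimg, Finset.sum_image (fun a _ b _ h => hτinj h)]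
    have hsumπ : ∑ i ∈ I, (π i : ℕ) = ∑ j ∈ Finset.Ico n (4*n), j := by
      rw [← hPimg, Finset.sum_image (fun a _ b _ h => hπinj h)]
    have hsum1 : ∑ i ∈ I, (4*n + (τ i : ℕ)) ≤ ∑ i ∈ I, (d (i:ℕ) + (π i : ℕ)) :=
      Finset.sum_le_sum hτπ
    rw [Finset.sum_add_distrib, Finset.sum_add_distrib, Finset.sum_const, hIcard,
      hsumτ, hsumπ, smul_eq_mul] at hsum1
    have hsumd : 3*n * (4*n) ≤ ∑ i ∈ I, d (i:ℕ) := by omega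
    have hall : ∀ i ∈ I, d (i:ℕ) = 4*n := by
      by_contra hcon
      push_neg at hcon
      obtain ⟨i0, hi0, hne⟩ := hcon
      have hlt : ∑ i ∈ I, d (i:ℕ) < ∑ i ∈ I, 4*n := by
        apply Finset.sum_lt_sum (fun i hi => hdle _ i.isLt)
        exact ⟨i0, hi0, lt_of_le_of_ne (hdle _ i0.isLt) hne⟩
      rw [Finset.sum_const, hIcard, smul_eq_mul] at hlt
      omega
    have hIS : I = Finset.univ.filter (fun i : Fin (4*n) => n ≤ (i:ℕ)) := by
      apply Finset.eq_of_subset_of_card_le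
      · intro i hi
        simp only [Finset.mem_filter, Finset.mem_univ, true_and]
        by_contra h
        push_neg at h
        have := (hsmall _ h).2
        have := hall i hi
        omega
      · rw [hScard, hIcard]
    intro i hi
    have hiI : i ∈ I := by
      rw [hIS]
      simp only [Finset.mem_filter, Finset.mem_univ, true_and]
      exact hi
    exact ⟨hπge i hiI, (hImem i).1 hiI⟩
  refine ⟨key, ?_, ?_⟩
  · rintro ⟨π, τ, hsol⟩
    have hkey := key π τ hsol
    have hc : ∀ i : Fin (4*n), ((π i : ℕ) + 1 ≤ d (i:ℕ)) ∧
        t ((τ i : ℕ)) ≤ d (i:ℕ) + ((π i : ℕ) + 1) := by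
      intro i
      have h := hsol i
      rwa [hdisc _ (π i).isLt] at h
    have hπsmall : ∀ i : Fin (4*n), (i:ℕ) < n → (π i : ℕ) < n := by
      intro i hi
      by_contra h
      push_neg at h
      set S := Finset.univ.filter (fun j : Fin (4*n) => n ≤ (j:ℕ)) with hS
      have hiS : i ∉ S := by
        simp only [hS, Finset.mem_filter, Finset.mem_univ, true_and]
        omega
      have hsub : (insert i S).image (fun j => (π j : ℕ)) ⊆ Finset.Ico n (4*n) := by
        intro x hx
        obtain ⟨j, hj, rfl⟩ := Finset.mem_image.1 hx
        rcases Finset.mem_insert.1 hj with rfl | hj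
        · exact Finset.mem_Ico.2 ⟨h, (π j).isLt⟩
        · have hjn : n ≤ (j:ℕ) := by
            simpa [hS] using hj
          exact Finset.mem_Ico.2 ⟨(hkey j hjn).1, (π j).isLt⟩
      have hπinj : Function.Injective (fun i : Fin (4*n) => (π i : ℕ)) :=
        fun a b h => π.injective (Fin.val_injective h)
      have hcard := Finset.card_le_card hsub
      rw [Finset.card_image_of_injective _ hπinj, Finset.card_insert_of_notMem hiS,
        hScard, Nat.card_Ico] at hcard
      omega
    have hτsmall : ∀ i : Fin (4*n), (i:ℕ) < n → (τ i : ℕ) < n := by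
      intro i hi
      by_contra h
      push_neg at h
      set S := Finset.univ.filter (fun j : Fin (4*n) => n ≤ (j:ℕ)) with hS
      have hiS : i ∉ S := by
        simp only [hS, Finset.mem_filter, Finset.mem_univ, true_and]
        omega
      have hsub : (insert i S).image (fun j => (τ j : ℕ)) ⊆ Finset.Ico n (4*n) := by
        intro x hx
        obtain ⟨j, hj, rfl⟩ := Finset.mem_image.1 hx
        rcases Finset.mem_insert.1 hj with rfl | hj
        · exact Finset.mem_Ico.2 ⟨h, (τ j).isLt⟩
        · have hjn : n ≤ (j:ℕ) := by
            simpa [hS] using hj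
          exact Finset.mem_Ico.2 ⟨(hkey j hjn).2, (τ j).isLt⟩
      have hτinj : Function.Injective (fun i : Fin (4*n) => (τ i : ℕ)) :=
        fun a b h => τ.injective (Fin.val_injective h)
      have hcard := Finset.card_le_card hsub
      rw [Finset.card_image_of_injective _ hτinj, Finset.card_insert_of_notMem hiS,
        hScard, Nat.card_Ico] at hcard
      omega
    let f : Fin n → Fin n := fun i =>
      ⟨(π ⟨i.val, by have := i.isLt; omega⟩ : ℕ), hπsmall _ i.isLt⟩
    let g : Fin n → Fin n := fun i =>
      ⟨(τ ⟨i.val, by have := i.isLt; omega⟩ : ℕ), hτsmall _ i.isLt⟩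
    have hfinj : Function.Injective f := by
      intro a b hab
      simp only [f, Fin.mk.injEq] at hab
      have h2 := π.injective (Fin.val_injective hab)
      have h3 := congrArg Fin.val h2
      exact Fin.val_injective h3
    have hginj : Function.Injective g := by
      intro a b hab
      simp only [g, Fin.mk.injEq] at hab
      have h2 := τ.injective (Fin.val_injective hab)
      have h3 := congrArg Fin.val h2
      exact Fin.val_injective h3
    refine ⟨Equiv.ofBijective f (Finite.injective_iff_bijective.mp hfinj),
      Equiv.ofBijective g (Finite.injective_iff_bijective.mp hginj), ?_⟩
    intro i
    have h := (hc ⟨i.val, by have := i.isLt; omega⟩).2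
    exact h
  · rintro ⟨π₀, τ₀, h0⟩
    let F : Fin (4*n) → Fin (4*n) := fun i =>
      if h : (i:ℕ) < n then ⟨(π₀ ⟨i, h⟩ : ℕ), by have := (π₀ ⟨i, h⟩).isLt; omega⟩ else i
    let G : Fin (4*n) → Fin (4*n) := fun i =>
      if h : (i:ℕ) < n then ⟨(τ₀ ⟨i, h⟩ : ℕ), by have := (τ₀ ⟨i, h⟩).isLt; omega⟩ else i
    have hFinj : Function.Injective F := by
      intro a b hab
      simp only [F] at hab
      split_ifs at hab with h1 h2 h2
      · rw [Fin.mk.injEq] at hab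
        have h3 : (π₀ ⟨a, h1⟩ : ℕ) = (π₀ ⟨b, h2⟩ : ℕ) := hab
        have h4 := π₀.injective (Fin.val_injective h3)
        have h5 := congrArg Fin.val h4
        exact Fin.val_injective h5
      · exfalso
        have h3 := congrArg Fin.val hab
        have := (π₀ ⟨a, h1⟩).isLt
        simp at h3
        omega
      · exfalso
        have h3 := congrArg Fin.val hab
        have := (π₀ ⟨b, h2⟩).isLt
        simp at h3
        omega
      · exact hab
    have hGinj : Function.Injective G := by
      intro a b hab
      simp only [G] at hab
      split_ifs at hab with h1 h2 h2
      · rw [Fin.mk.injEq] at hab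
        have h3 : (τ₀ ⟨a, h1⟩ : ℕ) = (τ₀ ⟨b, h2⟩ : ℕ) := hab
        have h4 := τ₀.injective (Fin.val_injective h3)
        have h5 := congrArg Fin.val h4
        exact Fin.val_injective h5
      · exfalso
        have h3 := congrArg Fin.val hab
        have := (τ₀ ⟨a, h1⟩).isLt
        simp at h3
        omega
      · exfalso
        have h3 := congrArg Fin.val hab
        have := (τ₀ ⟨b, h2⟩).isLt
        simp at h3
        omega
      · exact hab
    refine ⟨Equiv.ofBijective F (Finite.injective_iff_bijective.mp hFinj),
      Equiv.ofBijective G (Finite.injective_iff_bijective.mp hGinj), ?_⟩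
    intro i
    show disc d (4*n) ((F i : ℕ)) ≤ d (i:ℕ) ∧ t ((G i : ℕ)) ≤ d (i:ℕ) + disc d (4*n) ((F i : ℕ))
    rw [hdisc _ (F i).isLt]
    by_cases h : (i:ℕ) < n
    · have hF : (F i : ℕ) = (π₀ ⟨i, h⟩ : ℕ) := by simp [F, h]
      have hG : (G i : ℕ) = (τ₀ ⟨i, h⟩ : ℕ) := by simp [G, h]
      rw [hF, hG]
      constructor
      · have h1 := (π₀ ⟨i, h⟩).isLt
        have h2 := (hsmall _ h).1
        omega
      · exact h0 ⟨i, h⟩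
    · have hF : (F i : ℕ) = (i : ℕ) := by simp [F, h]
      have hG : (G i : ℕ) = (i : ℕ) := by simp [G, h]
      rw [hF, hG]
      have hd := hdummy _ (by omega) i.isLt
      have h1 : (i:ℕ) - n < 3*n := by have := i.isLt; omega
      have h2 := htdummy _ h1
      rw [show n + ((i:ℕ) - n) = (i:ℕ) by omega] at h2
      constructor
      · have := i.isLt; omega
      · omega
end

section
/- If a k-Visits instance (for some k ≥ 1) has no feasible schedule, then the same deadline sequence has no feasible schedule for k'-Visits for any k' > k, and has no feasible infinite Pinwheel schedule. -/
/-- A feasible schedule for the k-Visits problem with `n` tasks and deadlines `d`: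
`f` gives the task visited at each position in `[1, n*k]`, each task `i < n` is visited
exactly `k` times, and every occurrence of `i` is at most `d i` positions after the
previous occurrence of `i` (or after position `0` if it is the first occurrence). -/
def KVFeasible (n k : ℕ) (d : ℕ → ℕ) (f : ℕ → ℕ) : Prop :=
  (∀ p, 1 ≤ p → p ≤ n * k → f p < n) ∧
  (∀ i < n, ((Finset.Icc 1 (n * k)).filter fun p => f p = i).card = k) ∧
  (∀ i < n, ∀ p, 1 ≤ p → p ≤ n * k → f p = i →
    p ≤ d i ∨ ∃ q, 1 ≤ q ∧ q < p ∧ f q = i ∧ p ≤ q + d i)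


/-! Keep only the first `k` visits of every task in a schedule of horizon `B` in which every task
is visited at least `k` times, and close up the gaps. The kept visits of a task are an initial
segment of all its visits, and deleting positions never increases the distance between two kept
positions, so every deadline is still met: this is a `k`-Visits schedule. A `k'`-Visits schedule
with `k' > k` is such a schedule of horizon `n k'`; a Pinwheel schedule is one of horizon
`k · maxᵢ dᵢ`, because each window of `dᵢ` consecutive positions contains a visit of task `i`. -/

open Finset

def visits (g : ℕ → ℕ) (i p : ℕ) : ℕ := #{q ∈ Icc 1 p | g q = i}

section visits
variable {g : ℕ → ℕ} {i : ℕ}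

lemma visits_succ (p : ℕ) :
    visits g i (p + 1) = visits g i p + if g (p + 1) = i then 1 else 0 := by
  unfold visits
  rw [← insert_Icc_right_eq_Icc_add_one (by omega), filter_insert]
  split_ifs <;> simp [card_insert_of_notMem]

lemma monotone_visits : Monotone (visits g i) := fun _ _ hab =>
  card_le_card (filter_subset_filter _ (Icc_subset_Icc_right hab))

lemma visits_lt_visits {a b q : ℕ} (hq : q ∈ Ioc a b) (hgq : g q = i) :
    visits g i a < visits g i b := by
  obtain ⟨haq, hqb⟩ := mem_Ioc.mp hq
  obtain ⟨q, rfl⟩ : ∃ q', q = q' + 1 := ⟨q - 1, by omega⟩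
  calc visits g i a ≤ visits g i q := monotone_visits (by omega)
    _ < visits g i (q + 1) := by rw [visits_succ, if_pos hgq]; omega
    _ ≤ visits g i b := monotone_visits hqb

end visits

def firstVisits (g : ℕ → ℕ) (k B : ℕ) : Finset ℕ := {p ∈ Icc 1 B | visits g (g p) p ≤ k}

section firstVisits
variable {g : ℕ → ℕ} {k B : ℕ}

lemma filter_firstVisits_eq (i : ℕ) :
    {p ∈ firstVisits g k B | g p = i} = {p ∈ Icc 1 B | g p = i ∧ visits g i p ≤ k} := by
  ext p
  simp only [firstVisits, mem_filter]
  grind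

lemma card_filter_firstVisits (i : ℕ) :
    #{p ∈ firstVisits g k B | g p = i} = min k (visits g i B) := by
  rw [filter_firstVisits_eq]
  induction B with
  | zero => simp [visits]
  | succ B ih =>
    rw [← insert_Icc_right_eq_Icc_add_one (by omega), filter_insert, visits_succ]
    by_cases hB : g (B + 1) = i
    · have hnew : B + 1 ∉ {p ∈ Icc 1 B | g p = i ∧ visits g i p ≤ k} := by simp
      simp only [hB, true_and, if_true]
      split_ifs <;> simp only [card_insert_of_notMem hnew, ih] <;> omega
    · simp [hB, ih]

lemma mem_firstVisits_of_le {s q : ℕ} (hs : s ∈ firstVisits g k B) (hq : 1 ≤ q) (hqs : q ≤ s)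
    (hgq : g q = g s) : q ∈ firstVisits g k B := by
  simp only [firstVisits, mem_filter, mem_Icc] at hs ⊢
  exact ⟨⟨hq, hqs.trans hs.1.2⟩, hgq ▸ (monotone_visits hqs).trans hs.2⟩

end firstVisits

namespace Nat

lemma count_add_le (P : ℕ → Prop) [DecidablePred P] (a t : ℕ) :
    count P (a + t) ≤ count P a + t := by
  rw [count_add]
  exact Nat.add_le_add_left (count_le _) _

lemma count_lt_self {P : ℕ → Prop} [DecidablePred P] (hP0 : ¬ P 0) {s : ℕ} (hs : 0 < s) :
    count P s < s := by
  obtain ⟨t, rfl⟩ : ∃ t, s = 1 + t := ⟨s - 1, by omega⟩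
  have := count_add_le P 1 t
  rw [count_one, if_neg hP0] at this
  omega

variable {S : Finset ℕ}

lemma nth_mem_finset {j : ℕ} (hj : j < #S) : nth (· ∈ S) j ∈ S :=
  nth_mem_of_lt_card S.finite_toSet (by rwa [finite_toSet_toFinset])

lemma count_nth_finset {j : ℕ} (hj : j < #S) : count (· ∈ S) (nth (· ∈ S) j) = j :=
  count_nth_of_lt_card_finite S.finite_toSet (by rwa [finite_toSet_toFinset])

lemma count_lt_card_finset {s : ℕ} (hs : s ∈ S) : count (· ∈ S) s < #S := by
  simpa using count_lt_card (p := (· ∈ S)) S.finite_toSet hs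

end Nat

/-- Positions are `1`-indexed: position `p` of the compressed schedule is the `p`-th smallest
element of `S`. -/
noncomputable def compress (S : Finset ℕ) (g : ℕ → ℕ) (p : ℕ) : ℕ := g (Nat.nth (· ∈ S) (p - 1))

section compress
variable {S : Finset ℕ} {g : ℕ → ℕ}

lemma card_filter_compress (i : ℕ) :
    #{p ∈ Icc 1 #S | compress S g p = i} = #{s ∈ S | g s = i} := by
  apply card_nbij' (fun p => Nat.nth (· ∈ S) (p - 1)) (fun s => Nat.count (· ∈ S) s + 1)
  · intro p hp
    simp only [coe_filter, mem_Icc, Set.mem_ofPred_eq] at hp ⊢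
    exact ⟨Nat.nth_mem_finset (by omega), hp.2⟩
  · intro s hs
    simp only [coe_filter, mem_Icc, Set.mem_ofPred_eq] at hs ⊢
    refine ⟨⟨by omega, Nat.count_lt_card_finset hs.1⟩, ?_⟩
    simpa [compress, Nat.nth_count hs.1] using hs.2
  · intro p hp
    simp only [coe_filter, mem_Icc, Set.mem_ofPred_eq] at hp
    dsimp only
    rw [Nat.count_nth_finset (by omega)]
    omega
  · intro s hs
    simp only [coe_filter, Set.mem_ofPred_eq] at hs
    simp [Nat.nth_count hs.1]

lemma compress_gap (hS0 : 0 ∉ S) {i δ : ℕ}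
    (hgap : ∀ s ∈ S, g s = i → s ≤ δ ∨ ∃ q ∈ S, q < s ∧ g q = i ∧ s ≤ q + δ) :
    ∀ p, 1 ≤ p → p ≤ #S → compress S g p = i →
      p ≤ δ ∨ ∃ q, 1 ≤ q ∧ q < p ∧ compress S g q = i ∧ p ≤ q + δ := by
  intro p hp1 hpS hpi
  set s := Nat.nth (· ∈ S) (p - 1)
  have hs : s ∈ S := Nat.nth_mem_finset (by omega)
  have hcount : Nat.count (· ∈ S) s = p - 1 := Nat.count_nth_finset (by omega)
  rcases hgap s hs hpi with hsδ | ⟨q, hqS, hqs, hgq, hsq⟩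
  · have : Nat.count (· ∈ S) s < s :=
      Nat.count_lt_self hS0 (Nat.pos_of_ne_zero (ne_of_mem_of_not_mem hs hS0))
    left; omega
  · have hlt : Nat.count (· ∈ S) q < Nat.count (· ∈ S) s := Nat.count_strict_mono hqS hqs
    have hle := Nat.count_add_le (· ∈ S) q (s - q)
    rw [Nat.add_sub_cancel' hqs.le] at hle
    refine .inr ⟨Nat.count (· ∈ S) q + 1, by omega, by omega, ?_, by omega⟩
    simpa [compress, Nat.nth_count hqS] using hgq

end compress

theorem exists_kvFeasible_of_le_visits {n k B : ℕ} {d g : ℕ → ℕ}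
    (hval : ∀ p, 1 ≤ p → p ≤ B → g p < n)
    (hvisits : ∀ i < n, k ≤ visits g i B)
    (hgap : ∀ i < n, ∀ p, 1 ≤ p → p ≤ B → g p = i →
      p ≤ d i ∨ ∃ q, 1 ≤ q ∧ q < p ∧ g q = i ∧ p ≤ q + d i) :
    ∃ f, KVFeasible n k d f := by
  set S := firstVisits g k B
  have hSpos : ∀ s ∈ S, 1 ≤ s ∧ s ≤ B := fun s hs => mem_Icc.mp (mem_filter.mp hs).1
  have hfiber : ∀ i < n, #{p ∈ S | g p = i} = k := fun i hi => by
    rw [card_filter_firstVisits, min_eq_left (hvisits i hi)]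
  have hS : #S = n * k := by
    rw [card_eq_sum_card_fiberwise (f := g) (t := range n)
      fun s hs => mem_range.mpr (hval s (hSpos s hs).1 (hSpos s hs).2),
      sum_congr rfl fun i hi => hfiber i (mem_range.mp hi), sum_const, card_range, smul_eq_mul]
  have hS0 : 0 ∉ S := fun h0 => by simpa using (hSpos 0 h0).1
  refine ⟨compress S g, ?_, ?_, ?_⟩
  · intro p hp1 hp2
    have hs := hSpos _ (Nat.nth_mem_finset (S := S) (j := p - 1) (by omega))
    exact hval _ hs.1 hs.2
  · intro i hi
    rw [← hS, card_filter_compress, hfiber i hi]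
  · intro i hi
    rw [← hS]
    refine compress_gap hS0 fun s hs hgs => ?_
    obtain ⟨hs1, hsB⟩ := hSpos s hs
    rcases hgap i hi s hs1 hsB hgs with hsd | ⟨q, hq1, hqs, hgq, hsq⟩
    · exact .inl hsd
    · exact .inr ⟨q, mem_firstVisits_of_le hs hq1 hqs.le (hgq.trans hgs.symm), hqs, hgq, hsq⟩

section window
variable {g : ℕ → ℕ} {i δ : ℕ} (hw : ∀ t, ∃ q, t < q ∧ q ≤ t + δ ∧ g q = i)
include hw

lemma le_visits_mul_of_window {D : ℕ} (hδ : δ ≤ D) (j : ℕ) : j ≤ visits g i (j * D) := by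
  induction j with
  | zero => exact Nat.zero_le _
  | succ j ih =>
    obtain ⟨q, hjq, hqj, hgq⟩ := hw (j * D)
    have := visits_lt_visits (mem_Ioc.mpr ⟨hjq, show q ≤ (j + 1) * D by
      rw [Nat.add_one_mul]; omega⟩) hgq
    omega

lemma prev_visit_of_window (p : ℕ) : p ≤ δ ∨ ∃ q, 1 ≤ q ∧ q < p ∧ g q = i ∧ p ≤ q + δ := by
  by_cases hp : p ≤ δ
  · exact .inl hp
  · obtain ⟨q, hq, hqp, hgq⟩ := hw (p - 1 - δ)
    exact .inr ⟨q, by omega, by omega, hgq, by omega⟩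

end window

theorem stmt_18_general (n k : ℕ) (d : ℕ → ℕ)
    (h : ¬ ∃ f : ℕ → ℕ, KVFeasible n k d f) :
    (∀ k', k < k' → ¬ ∃ f : ℕ → ℕ, KVFeasible n k' d f) ∧
    ¬ ∃ g : ℕ → ℕ, (∀ p, 1 ≤ p → g p < n) ∧
      (∀ i < n, ∀ t : ℕ, ∃ q, t < q ∧ q ≤ t + d i ∧ g q = i) := by
  refine ⟨?_, ?_⟩
  · rintro k' hk' ⟨f, hval, hcount, hgap⟩
    exact h (exists_kvFeasible_of_le_visits hval (fun i hi => hk'.le.trans_eq (hcount i hi).symm)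
      hgap)
  · rintro ⟨g, hval, hwindow⟩
    exact h (exists_kvFeasible_of_le_visits (B := k * (range n).sup d) (fun p hp _ => hval p hp)
      (fun i hi => le_visits_mul_of_window (hwindow i hi) (le_sup (mem_range.mpr hi)) k)
      fun i hi p _ _ _ => prev_visit_of_window (hwindow i hi) p)

theorem stmt_18 (n k : ℕ) (d : ℕ → ℕ) (hk : 1 ≤ k) (hpos : ∀ i < n, 0 < d i)
    (h : ¬ ∃ f : ℕ → ℕ, KVFeasible n k d f) :
    (∀ k', k < k' → ¬ ∃ f : ℕ → ℕ, KVFeasible n k' d f) ∧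
    ¬ ∃ g : ℕ → ℕ, (∀ p, 1 ≤ p → g p < n) ∧
      (∀ i < n, ∀ t : ℕ, ∃ q, t < q ∧ q ≤ t + d i ∧ g q = i) :=
  stmt_18_general n k d h
end

section
/- A 2-Visits instance D with deadlines d_1 ≤ ... ≤ d_n has a feasible schedule if and only if the Var-k-Visits instance G with deadlines g_{i1} = g_{i2} = d_i and g_{ij} = 3n for j ≥ 3 has a feasible schedule, for any fixed k ≥ 2. -/
/-- A feasible schedule for the Var-k-Visits problem with `n` tasks and deadlines
`g i j` (the deadline for the `j`-th occurrence of task `i`, `j` counted from 1):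
`f` gives the task visited at each position in `[1, n*k]`, each task `i < n` is visited
exactly `k` times, the first occurrence of `i` is at position at most `g i 1`, and the
`j`-th occurrence of `i` is at most `g i j` positions after the `(j-1)`-th occurrence. -/
def VarKVFeasible (n k : ℕ) (g : ℕ → ℕ → ℕ) (f : ℕ → ℕ) : Prop :=
  (∀ p, 1 ≤ p → p ≤ n * k → f p < n) ∧
  (∀ i < n, ((Finset.Icc 1 (n * k)).filter fun p => f p = i).card = k) ∧
  (∀ i < n, ∀ p, 1 ≤ p → p ≤ n * k → f p = i →
    ((((Finset.Icc 1 p).filter fun q => f q = i).card = 1 → p ≤ g i 1) ∧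
     (∀ q, 1 ≤ q → q < p → f q = i → (∀ r, q < r → r < p → f r ≠ i) →
        p ≤ q + g i (((Finset.Icc 1 p).filter fun q' => f q' = i).card))))

/-!
Forward direction: after a feasible 2-visit schedule append `k - 2` rounds visiting the tasks
cyclically. Inside these rounds consecutive visits of a task are `n` positions apart, and the first
appended visit of a task lies within `3n` positions of anything before it.

Backward direction: keep only the first two visits of every task and close up the gaps. Closing up
only shrinks distances, and since all dropped visits of a task come after its kept ones, two
consecutive kept visits of a task remain consecutive.
-/

open Finset

namespace Nat

theorem count_congr_of_lt {p q : ℕ → Prop} [DecidablePred p] [DecidablePred q] {n : ℕ}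
    (h : ∀ x < n, p x ↔ q x) : count p n = count q n :=
  (count_mono_left fun x hx => (h x hx).1).antisymm (count_mono_left fun x hx => (h x hx).2)

theorem card_filter_Icc_one_eq_count (p : ℕ → Prop) [DecidablePred p] (n : ℕ) :
    #{x ∈ Icc 1 n | p x} = count (fun x => p (x + 1)) n := by
  rw [count_eq_card_filter_range]
  refine card_nbij' (· - 1) (· + 1) ?_ ?_ ?_ ?_ <;> intro x hx <;>
    simp only [coe_filter, mem_Icc, mem_range, Set.mem_ofPred_eq] at hx ⊢
  · exact ⟨by omega, by rw [Nat.sub_add_cancel hx.1.1]; exact hx.2⟩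
  · exact ⟨by omega, hx.2⟩
  · omega
  · omega

end Nat

open Nat

def visitCount (f : ℕ → ℕ) (i p : ℕ) : ℕ := count (fun x => f (x + 1) = i) p

section visitCount

variable {f f' : ℕ → ℕ} {i p q : ℕ}

theorem card_filter_Icc_eq_visitCount (f : ℕ → ℕ) (i p : ℕ) :
    #{q ∈ Icc 1 p | f q = i} = visitCount f i p :=
  card_filter_Icc_one_eq_count _ p

theorem visitCount_mono (h : q ≤ p) : visitCount f i q ≤ visitCount f i p :=
  count_monotone _ h

theorem visitCount_lt_visitCount (hp : f p = i) (hqp : q < p) :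
    visitCount f i q < visitCount f i p :=
  (visitCount_mono (by omega : q ≤ p - 1)).trans_lt
    (count_strict_mono (by rwa [Nat.sub_add_cancel (by omega)]) (by omega))

theorem visitCount_congr (h : ∀ q, 1 ≤ q → q ≤ p → f q = f' q) :
    visitCount f i p = visitCount f' i p :=
  count_congr_of_lt fun x hx => by rw [h (x + 1) (by omega) hx]

end visitCount

def OnTime (g : ℕ → ℕ → ℕ) (f : ℕ → ℕ) (p : ℕ) : Prop :=
  (visitCount f (f p) p = 1 → p ≤ g (f p) 1) ∧
  ∀ q, 1 ≤ q → q < p → f q = f p → (∀ r, q < r → r < p → f r ≠ f p) →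
    p ≤ q + g (f p) (visitCount f (f p) p)

section OnTime

variable {g g' : ℕ → ℕ → ℕ} {f f' : ℕ → ℕ} {p : ℕ}

theorem OnTime.mono (h : OnTime g f p)
    (hg : ∀ j ≤ visitCount f (f p) p, g (f p) j ≤ g' (f p) j) : OnTime g' f p :=
  ⟨fun h1 => (h.1 h1).trans (hg 1 h1.ge),
    fun q hq hqp hfq hno => (h.2 q hq hqp hfq hno).trans (Nat.add_le_add_left (hg _ le_rfl) q)⟩

theorem OnTime.congr (h : OnTime g f p) (hff' : ∀ q, 1 ≤ q → q ≤ p → f q = f' q) :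
    OnTime g f' p := by
  obtain rfl | hp := Nat.eq_zero_or_pos p
  · exact ⟨fun h1 => by simp [visitCount] at h1, fun q _ hq => absurd hq q.not_lt_zero⟩
  have hfp : f' p = f p := (hff' p hp le_rfl).symm
  have hc : visitCount f' (f p) p = visitCount f (f p) p := (visitCount_congr hff').symm
  refine ⟨fun h1 => ?_, fun q hq hqp hfq hno => ?_⟩
  · rw [hfp, hc] at h1
    rw [hfp]
    exact h.1 h1
  · rw [hfp, hc]
    rw [hfp, ← hff' q hq hqp.le] at hfq
    refine h.2 q hq hqp hfq fun r hqr hrp hfr => hno r hqr hrp ?_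
    rw [hfp, ← hff' r (by omega) hrp.le, hfr]

end OnTime

theorem varKVFeasible_iff {n k : ℕ} {g : ℕ → ℕ → ℕ} {f : ℕ → ℕ} :
    VarKVFeasible n k g f ↔ (∀ p, 1 ≤ p → p ≤ n * k → f p < n) ∧
      (∀ i < n, visitCount f i (n * k) = k) ∧
      ∀ p, 1 ≤ p → p ≤ n * k → OnTime g f p := by
  simp only [VarKVFeasible, OnTime, card_filter_Icc_eq_visitCount]
  refine ⟨fun ⟨h1, h2, h3⟩ => ⟨h1, h2, fun p hp hpn => h3 _ (h1 p hp hpn) p hp hpn rfl⟩,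
    fun ⟨h1, h2, h3⟩ => ⟨h1, h2, ?_⟩⟩
  rintro i - p hp hpn rfl
  exact h3 p hp hpn

theorem VarKVFeasible.mono {n k : ℕ} {g g' : ℕ → ℕ → ℕ} {f : ℕ → ℕ}
    (hf : VarKVFeasible n k g f) (hg : ∀ i < n, ∀ j ≤ k, g i j ≤ g' i j) :
    VarKVFeasible n k g' f := by
  rw [varKVFeasible_iff] at hf ⊢
  obtain ⟨h1, h2, h3⟩ := hf
  refine ⟨h1, h2, fun p hp hpn => (h3 p hp hpn).mono fun j hj => hg _ (h1 p hp hpn) j ?_⟩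
  exact hj.trans (h2 _ (h1 p hp hpn) ▸ visitCount_mono hpn)

def appendRounds (n k : ℕ) (f : ℕ → ℕ) (p : ℕ) : ℕ :=
  if p ≤ n * k then f p else (p - 1) % n

section appendRounds

variable {n k i p : ℕ} {f : ℕ → ℕ} {g : ℕ → ℕ → ℕ}

theorem appendRounds_of_le (h : p ≤ n * k) : appendRounds n k f p = f p := if_pos h

theorem appendRounds_of_lt (h : n * k < p) : appendRounds n k f p = (p - 1) % n := if_neg h.not_ge

theorem visitCount_appendRounds_of_le (hp : p ≤ n * k) :
    visitCount (appendRounds n k f) i p = visitCount f i p :=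
  visitCount_congr fun _ _ hq => appendRounds_of_le (hq.trans hp)

theorem visitCount_appendRounds (hi : i < n) (m : ℕ) :
    visitCount (appendRounds n k f) i (n * k + n * m) = visitCount f i (n * k) + m := by
  have hn : 0 < n := by omega
  rw [visitCount, count_add, ← visitCount, visitCount_appendRounds_of_le le_rfl]
  congr 1
  calc count (fun x => appendRounds n k f (n * k + x + 1) = i) (n * m)
      = count (· ≡ i [MOD n]) (n * m) := count_congr_of_lt fun x _ => by
        rw [appendRounds_of_lt (by omega), Nat.add_sub_cancel, Nat.mul_add_mod, Nat.ModEq,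
          Nat.mod_eq_of_lt hi]
    _ = m := by simp [count_modEq_card _ hn, Nat.mul_div_cancel_left _ hn]

theorem appendRounds_sub (h : n * k + n < p) :
    appendRounds n k f (p - n) = appendRounds n k f p := by
  rw [appendRounds_of_lt (by omega), appendRounds_of_lt (by omega),
    show p - 1 = p - n - 1 + n by omega, Nat.add_mod_right]

theorem lt_visitCount_appendRounds (hk : ∀ i < n, visitCount f i (n * k) = k) (hn : 0 < n)
    (hp : n * k < p) : k < visitCount (appendRounds n k f) (appendRounds n k f p) p := by
  have hi : appendRounds n k f p < n := by
    rw [appendRounds_of_lt hp]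
    exact Nat.mod_lt _ hn
  calc k = visitCount (appendRounds n k f) (appendRounds n k f p) (n * k) := by
        rw [visitCount_appendRounds_of_le le_rfl, hk _ hi]
    _ < _ := visitCount_lt_visitCount rfl hp

theorem onTime_appendRounds_of_lt (hk : ∀ i < n, visitCount f i (n * k) = k) (hn : 0 < n)
    (hp : n * k < p) :
    OnTime (fun i j => if j ≤ k then g i j else n * (k + 1)) (appendRounds n k f) p := by
  have hc := lt_visitCount_appendRounds hk hn hp
  -- in the appended rounds, the previous visit of the same task is `n` positions earlier
  have hprev : n * k + n < p → appendRounds n k f (p - n) = appendRounds n k f p ∧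
      k + 1 < visitCount (appendRounds n k f) (appendRounds n k f p) p := fun h => by
    have hsub := appendRounds_sub (f := f) h
    have := lt_visitCount_appendRounds hk hn (p := p - n) (by omega)
    rw [hsub] at this
    exact ⟨hsub, Nat.lt_of_le_of_lt this (visitCount_lt_visitCount rfl (by omega))⟩
  rw [Nat.mul_succ]
  refine ⟨fun h1 => ?_, fun q hq hqp hFq hno => ?_⟩
  · have hk0 : k = 0 := by omega
    have : p ≤ n * k + n := by
      by_contra h
      have := (hprev (by omega)).2
      omega
    simpa [hk0] using this
  · show p ≤ q + if visitCount (appendRounds n k f) (appendRounds n k f p) p ≤ k then _ else _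
    rw [if_neg (by omega)]
    by_cases h : n * k + n < p
    · have : p - n ≤ q := by
        by_contra hlt
        exact hno (p - n) (by omega) (by omega) (hprev h).1
      omega
    · omega

theorem VarKVFeasible.extend (hf : VarKVFeasible n k g f) (m : ℕ) :
    VarKVFeasible n (k + m) (fun i j => if j ≤ k then g i j else n * (k + 1))
      (appendRounds n k f) := by
  rw [varKVFeasible_iff] at hf ⊢
  obtain ⟨h1, h2, h3⟩ := hf
  rw [Nat.mul_add]
  have hn : ∀ p, n * k < p → p ≤ n * k + n * m → 0 < n := fun p hpk hp =>
    Nat.pos_of_ne_zero (by rintro rfl; simp at hp hpk; omega)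
  refine ⟨fun p hp1 hp => ?_, fun i hi => ?_, fun p hp1 hp => ?_⟩
  · by_cases hpk : p ≤ n * k
    · rw [appendRounds_of_le hpk]
      exact h1 p hp1 hpk
    · rw [appendRounds_of_lt (by omega)]
      exact Nat.mod_lt _ (hn p (by omega) hp)
  · rw [visitCount_appendRounds hi, h2 i hi]
  · by_cases hpk : p ≤ n * k
    · have hFp : appendRounds n k f p = f p := appendRounds_of_le hpk
      refine ((h3 p hp1 hpk).congr fun q _ hq => (appendRounds_of_le (hq.trans hpk)).symm).mono
        fun j hj => (if_pos (hj.trans ?_)).ge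
      rw [visitCount_appendRounds_of_le hpk, hFp, ← h2 _ (h1 p hp1 hpk)]
      exact visitCount_mono hpk
    · exact onTime_appendRounds_of_lt h2 (hn p (by omega) hp) (by omega)

end appendRounds

namespace Nat

variable {P : ℕ → Prop} [DecidablePred P]

theorem count_and_eq_count_comp_nth (Q : ℕ → Prop) [DecidablePred Q] (x : ℕ) :
    count (fun y => P y ∧ Q y) x = count (fun a => Q (nth P a)) (count P x) := by
  induction x with
  | zero => simp
  | succ x ih =>
    by_cases hx : P x
    · rw [count_succ, count_succ P, if_pos hx, count_succ, nth_count hx, ih]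
      simp [hx]
    · rw [count_succ, count_succ P, ih]
      simp [hx]

theorem sub_le_nth_sub_nth (hP : (Set.ofPred P).Finite) {a b : ℕ} (hab : a ≤ b)
    (hb : b < #hP.toFinset) : b - a ≤ nth P b - nth P a := by
  have h := count_add P (nth P a) (nth P b - nth P a)
  rw [Nat.add_sub_cancel' (nth_le_nth_of_lt_card hP hab hb), count_nth_of_lt_card_finite hP hb,
    count_nth_of_lt_card_finite hP (hab.trans_lt hb)] at h
  have := count_le (fun k => P (nth P a + k)) (n := nth P b - nth P a)
  omega

theorem card_toFinset_eq_count (hP : (Set.ofPred P).Finite) {n : ℕ} (h : ∀ x, P x → x < n) :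
    #hP.toFinset = count P n := by
  rw [count_eq_card_filter_range]
  congr 1
  ext x
  simpa using fun hx => h x hx

end Nat

theorem count_visitCount_le (f : ℕ → ℕ) (i j N : ℕ) :
    count (fun x => f (x + 1) = i ∧ visitCount f i (x + 1) ≤ j) N =
      min j (visitCount f i N) := by
  induction N with
  | zero => rw [count_zero, visitCount, count_zero, Nat.min_zero]
  | succ N ih =>
    have hv : visitCount f i (N + 1) = visitCount f i N + if f (N + 1) = i then 1 else 0 :=
      count_succ _ _
    rw [count_succ, ih, hv]
    split_ifs <;> omega

-- `x` stands for position `x + 1`, so that `Nat.nth` enumerates the kept positions from `0`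
def IsKeptVisit (f : ℕ → ℕ) (N j x : ℕ) : Prop :=
  x < N ∧ visitCount f (f (x + 1)) (x + 1) ≤ j

instance (f : ℕ → ℕ) (N j : ℕ) : DecidablePred (IsKeptVisit f N j) :=
  fun _ => instDecidableAnd

noncomputable def truncateSchedule (f : ℕ → ℕ) (N j p : ℕ) : ℕ :=
  f (nth (IsKeptVisit f N j) (p - 1) + 1)

section truncateSchedule

variable {f : ℕ → ℕ} {g : ℕ → ℕ → ℕ} {n k N j a : ℕ}

theorem isKeptVisit_finite (f : ℕ → ℕ) (N j : ℕ) :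
    (Set.ofPred (IsKeptVisit f N j)).Finite :=
  (Set.finite_Iio N).subset fun _ hx => hx.1

theorem IsKeptVisit.of_le {x y : ℕ} (hy : IsKeptVisit f N j y) (hxy : x ≤ y)
    (hfx : f (x + 1) = f (y + 1)) : IsKeptVisit f N j x :=
  ⟨hxy.trans_lt hy.1, by rw [hfx]; exact (visitCount_mono (by omega)).trans hy.2⟩

theorem count_isKeptVisit_and (i : ℕ) :
    count (fun x => IsKeptVisit f N j x ∧ f (x + 1) = i) N = min j (visitCount f i N) := by
  rw [← count_visitCount_le]
  refine count_congr_of_lt fun x hx => ?_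
  simp only [IsKeptVisit, hx, true_and]
  constructor
  · rintro ⟨hc, rfl⟩
    exact ⟨rfl, hc⟩
  · rintro ⟨rfl, hc⟩
    exact ⟨hc, rfl⟩

theorem count_isKeptVisit (h1 : ∀ x < N, f (x + 1) < n) (hj : ∀ i < n, j ≤ visitCount f i N) :
    count (IsKeptVisit f N j) N = n * j := by
  rw [count_eq_card_filter_range, card_eq_sum_card_fiberwise (f := fun x => f (x + 1))
    (t := range n) fun x hx => mem_range.2 (h1 x (mem_range.1 (mem_filter.1 hx).1))]
  calc ∑ i ∈ range n, #{x ∈ {x ∈ range N | IsKeptVisit f N j x} | f (x + 1) = i}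
      = ∑ _ ∈ range n, j := sum_congr rfl fun i hi => by
        rw [filter_filter, ← count_eq_card_filter_range, count_isKeptVisit_and,
          min_eq_left (hj i (mem_range.1 hi))]
    _ = n * j := by simp

theorem visitCount_truncateSchedule (ha : a < #(isKeptVisit_finite f N j).toFinset) :
    visitCount (truncateSchedule f N j) (truncateSchedule f N j (a + 1)) (a + 1) =
      visitCount f (f (nth (IsKeptVisit f N j) a + 1)) (nth (IsKeptVisit f N j) a + 1) := by
  set P := IsKeptVisit f N j
  have hx : P (nth P a) := nth_mem_of_lt_card _ ha
  calc visitCount (truncateSchedule f N j) (truncateSchedule f N j (a + 1)) (a + 1)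
      = count (fun b => f (nth P b + 1) = f (nth P a + 1)) (count P (nth P a + 1)) := by
        rw [count_nth_succ fun _ => ha]
        rfl
    _ = count (fun x => P x ∧ f (x + 1) = f (nth P a + 1)) (nth P a + 1) :=
        (count_and_eq_count_comp_nth (fun x => f (x + 1) = f (nth P a + 1)) _).symm
    _ = _ := count_congr_of_lt fun x hxa =>
        ⟨And.right, fun h => ⟨hx.of_le (by omega) h, h⟩⟩

theorem onTime_truncateSchedule (ha : a < #(isKeptVisit_finite f N j).toFinset)
    (hon : OnTime g f (nth (IsKeptVisit f N j) a + 1)) :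
    OnTime g (truncateSchedule f N j) (a + 1) := by
  have hP := isKeptVisit_finite f N j
  have hfa : truncateSchedule f N j (a + 1) = f (nth (IsKeptVisit f N j) a + 1) := rfl
  refine ⟨fun h1 => ?_, fun q hq hqa hfq hno => ?_⟩
  · rw [visitCount_truncateSchedule ha] at h1
    rw [hfa]
    exact (Nat.add_le_add_right (le_nth fun _ => ha) 1).trans (hon.1 h1)
  rw [visitCount_truncateSchedule ha, hfa]
  have hlt : nth (IsKeptVisit f N j) (q - 1) < nth (IsKeptVisit f N j) a :=
    nth_lt_nth_of_lt_card hP (by omega) ha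
  have hgap := sub_le_nth_sub_nth hP (by omega : q - 1 ≤ a) ha
  have hfq' : f (nth (IsKeptVisit f N j) (q - 1) + 1) = f (nth (IsKeptVisit f N j) a + 1) := hfq
  -- a visit of the task strictly between two consecutive kept ones would be kept as well
  have hno' : ∀ r, nth (IsKeptVisit f N j) (q - 1) + 1 < r →
      r < nth (IsKeptVisit f N j) a + 1 → f r ≠ f (nth (IsKeptVisit f N j) a + 1) := by
    intro r hqr hra hfr
    have hr : IsKeptVisit f N j (r - 1) :=
      (nth_mem_of_lt_card hP ha).of_le (by omega) (by rwa [Nat.sub_add_cancel (by omega)])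
    obtain ⟨t, ht, hte⟩ := exists_lt_card_finite_nth_eq hP hr
    have hqt : q - 1 < t := lt_of_nth_lt_nth_of_lt_card hP (by omega) (by omega)
    have hta : t < a := lt_of_nth_lt_nth_of_lt_card hP (by omega) ht
    refine hno (t + 1) (by omega) (by omega) ?_
    show f (nth (IsKeptVisit f N j) t + 1) = f (nth (IsKeptVisit f N j) a + 1)
    rw [hte, Nat.sub_add_cancel (by omega), hfr]
  have := hon.2 _ (by omega) (by omega) hfq' hno'
  omega

theorem VarKVFeasible.truncate (hf : VarKVFeasible n k g f) (hj : j ≤ k) :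
    VarKVFeasible n j g (truncateSchedule f (n * k) j) := by
  rw [varKVFeasible_iff] at hf ⊢
  obtain ⟨h1, h2, h3⟩ := hf
  set P := IsKeptVisit f (n * k) j
  have h1' : ∀ x < n * k, f (x + 1) < n := fun x hx => h1 (x + 1) (by omega) hx
  have hK : #(isKeptVisit_finite f (n * k) j).toFinset = n * j := by
    rw [card_toFinset_eq_count _ fun _ hx => hx.1,
      count_isKeptVisit h1' fun i hi => hj.trans (h2 i hi).ge]
  refine ⟨fun p hp1 hp => ?_, fun i hi => ?_, fun p hp1 hp => ?_⟩
  · exact h1' _ (nth_mem_of_lt_card _ (hK ▸ (by omega : p - 1 < n * j))).1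
  · calc visitCount (truncateSchedule f (n * k) j) i (n * j)
        = count (fun b => f (nth P b + 1) = i) (count P (n * k)) := by
          rw [← card_toFinset_eq_count (isKeptVisit_finite f (n * k) j) fun _ hx => hx.1, hK]
          rfl
      _ = count (fun x => P x ∧ f (x + 1) = i) (n * k) :=
          (count_and_eq_count_comp_nth (fun x => f (x + 1) = i) _).symm
      _ = j := by rw [count_isKeptVisit_and, h2 i hi, min_eq_left hj]
  · obtain ⟨a, rfl⟩ : ∃ a, p = a + 1 := ⟨p - 1, by omega⟩
    have ha : a < #(isKeptVisit_finite f (n * k) j).toFinset := by omega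
    exact onTime_truncateSchedule ha (h3 _ (by omega) (nth_mem_of_lt_card _ ha).1)

end truncateSchedule

theorem stmt_19_general (n k : ℕ) (d : ℕ → ℕ) (hk : 2 ≤ k) :
    (∃ f : ℕ → ℕ, VarKVFeasible n 2 (fun i _ => d i) f) ↔
      (∃ f : ℕ → ℕ, VarKVFeasible n k (fun i j => if j ≤ 2 then d i else 3 * n) f) := by
  constructor
  · rintro ⟨f, hf⟩
    obtain ⟨m, rfl⟩ : ∃ m, k = 2 + m := ⟨k - 2, by omega⟩
    refine ⟨_, (hf.extend m).mono fun i _ j _ => ?_⟩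
    split_ifs <;> omega
  · rintro ⟨f, hf⟩
    exact ⟨_, (hf.truncate hk).mono fun i _ j hj => by simp [hj]⟩

theorem stmt_19 (n k : ℕ) (d : ℕ → ℕ) (hk : 2 ≤ k)
    (hpos : ∀ i < n, 0 < d i) (hmono : ∀ i j, i ≤ j → j < n → d i ≤ d j) :
    (∃ f : ℕ → ℕ, VarKVFeasible n 2 (fun i _ => d i) f) ↔
      (∃ f : ℕ → ℕ, VarKVFeasible n k (fun i j => if j ≤ 2 then d i else 3 * n) f) :=
  stmt_19_general n k d hk
end
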